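/- arXiv:1403.5664 — 7 statements merged into one kernel-verified Lean document; each statement's English description precedes it below -/
import Mathlib

section
/- The number of 132-avoiding permutations of {1,…,n} equals the n-th Catalan number c_n. -/
open Finset

/-- A permutation of `{1,…,n}` (modeled on `Fin n`) is 132-avoiding if there are
no indices `i < j < l` with `π i < π l < π j`. -/
def avoids132 {n : ℕ} (π : Equiv.Perm (Fin n)) : Prop :=
  ∀ i j l : Fin n, i < j → j < l → ¬(π i < π l ∧ π l < π j)

instance avoids132.dec {n : ℕ} : DecidablePred (avoids132 (n := n)) := fun π => by
  unfold avoids132; infer_instance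

/-- A permutation is 123-avoiding if there are no indices `i < j < l` with
`π i < π j < π l`. -/
def avoids123 {n : ℕ} (π : Equiv.Perm (Fin n)) : Prop :=
  ∀ i j l : Fin n, i < j → j < l → ¬(π i < π j ∧ π j < π l)

instance avoids123.dec {n : ℕ} : DecidablePred (avoids123 (n := n)) := fun π => by
  unfold avoids123; infer_instance

/-- The finite set of 132-avoiding permutations of `{1,…,n}`. -/
def AV132 (n : ℕ) : Finset (Equiv.Perm (Fin n)) := univ.filter avoids132

/-- The finite set of 123-avoiding permutations of `{1,…,n}`. -/
def AV123 (n : ℕ) : Finset (Equiv.Perm (Fin n)) := univ.filter avoids123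

/-- number of non-inversions: pairs `i < j` with `π i < π j` (pattern 12). -/
def a12 {n : ℕ} (π : Equiv.Perm (Fin n)) : ℕ :=
  (univ.filter (fun p : Fin n × Fin n => p.1 < p.2 ∧ π p.1 < π p.2)).card

/-- number of inversions: pairs `i < j` with `π j < π i` (pattern 21). -/
def a21 {n : ℕ} (π : Equiv.Perm (Fin n)) : ℕ :=
  (univ.filter (fun p : Fin n × Fin n => p.1 < p.2 ∧ π p.2 < π p.1)).card

/-- occurrences of pattern 123: triples `i < j < l` with `π i < π j < π l`. -/
def a123 {n : ℕ} (π : Equiv.Perm (Fin n)) : ℕ :=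
  (univ.filter (fun p : Fin n × Fin n × Fin n =>
    p.1 < p.2.1 ∧ p.2.1 < p.2.2 ∧ π p.1 < π p.2.1 ∧ π p.2.1 < π p.2.2)).card

/-- occurrences of pattern 321: triples `i < j < l` with `π l < π j < π i`. -/
def a321 {n : ℕ} (π : Equiv.Perm (Fin n)) : ℕ :=
  (univ.filter (fun p : Fin n × Fin n × Fin n =>
    p.1 < p.2.1 ∧ p.2.1 < p.2.2 ∧ π p.2.2 < π p.2.1 ∧ π p.2.1 < π p.1)).card

/-- occurrences of pattern 231: triples `i < j < l` with `π l < π i < π j`. -/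
def a231 {n : ℕ} (π : Equiv.Perm (Fin n)) : ℕ :=
  (univ.filter (fun p : Fin n × Fin n × Fin n =>
    p.1 < p.2.1 ∧ p.2.1 < p.2.2 ∧ π p.2.2 < π p.1 ∧ π p.1 < π p.2.1)).card

/-- occurrences of pattern 213: triples `i < j < l` with `π j < π i < π l`. -/
def a213 {n : ℕ} (π : Equiv.Perm (Fin n)) : ℕ :=
  (univ.filter (fun p : Fin n × Fin n × Fin n =>
    p.1 < p.2.1 ∧ p.2.1 < p.2.2 ∧ π p.2.1 < π p.1 ∧ π p.1 < π p.2.2)).card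

/-- occurrences of pattern 312: triples `i < j < l` with `π j < π l < π i`. -/
def a312 {n : ℕ} (π : Equiv.Perm (Fin n)) : ℕ :=
  (univ.filter (fun p : Fin n × Fin n × Fin n =>
    p.1 < p.2.1 ∧ p.2.1 < p.2.2 ∧ π p.2.1 < π p.2.2 ∧ π p.2.2 < π p.1)).card

/-- occurrences of pattern 4321: quadruples `i < j < l < m` with
`π m < π l < π j < π i`. -/
def a4321 {n : ℕ} (π : Equiv.Perm (Fin n)) : ℕ :=
  (univ.filter (fun p : Fin n × Fin n × Fin n × Fin n =>
    p.1 < p.2.1 ∧ p.2.1 < p.2.2.1 ∧ p.2.2.1 < p.2.2.2 ∧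
    π p.2.2.2 < π p.2.2.1 ∧ π p.2.2.1 < π p.2.1 ∧ π p.2.1 < π p.1)).card

section GlueDev

variable {a b : ℕ}

/-- glue function: left block gets σ shifted up by b, position a gets the top, right block gets τ. -/
noncomputable def glueFun (σ : Equiv.Perm (Fin a)) (τ : Equiv.Perm (Fin b)) (i : Fin (a+b+1)) : Fin (a+b+1) :=
  if h : (i : ℕ) < a then
    ⟨b + (σ ⟨i, h⟩ : ℕ), by have := (σ ⟨i, h⟩).isLt; omega⟩
  else if h2 : (i : ℕ) = a then ⟨a + b, by omega⟩
  else ⟨(τ ⟨(i : ℕ) - a - 1, by have := i.isLt; omega⟩ : ℕ), by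
    have := (τ ⟨(i : ℕ) - a - 1, by have := i.isLt; omega⟩).isLt; omega⟩

lemma glueFun_val_lt (σ : Equiv.Perm (Fin a)) (τ : Equiv.Perm (Fin b)) (i : Fin (a+b+1))
    (h : (i : ℕ) < a) : (glueFun σ τ i : ℕ) = b + (σ ⟨i, h⟩ : ℕ) := by
  unfold glueFun; rw [dif_pos h]

lemma glueFun_val_eq (σ : Equiv.Perm (Fin a)) (τ : Equiv.Perm (Fin b)) (i : Fin (a+b+1))
    (h : (i : ℕ) = a) : (glueFun σ τ i : ℕ) = a + b := by
  unfold glueFun; rw [dif_neg (by omega), dif_pos h]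

lemma glueFun_val_gt (σ : Equiv.Perm (Fin a)) (τ : Equiv.Perm (Fin b)) (i : Fin (a+b+1))
    (h : a < (i : ℕ)) :
    (glueFun σ τ i : ℕ) = (τ ⟨(i : ℕ) - a - 1, by have := i.isLt; omega⟩ : ℕ) := by
  unfold glueFun; rw [dif_neg (by omega), dif_neg (by omega)]

lemma glueFun_inj (σ : Equiv.Perm (Fin a)) (τ : Equiv.Perm (Fin b)) :
    Function.Injective (glueFun σ τ) := by
  intro i j hij
  have hv : (glueFun σ τ i : ℕ) = (glueFun σ τ j : ℕ) := congrArg Fin.val hij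
  rcases lt_trichotomy (i : ℕ) a with hi | hi | hi <;>
    rcases lt_trichotomy (j : ℕ) a with hj | hj | hj
  · rw [glueFun_val_lt σ τ i hi, glueFun_val_lt σ τ j hj] at hv
    have : σ ⟨i, hi⟩ = σ ⟨j, hj⟩ := Fin.ext (by omega)
    have := σ.injective this
    exact Fin.ext (by simpa [Fin.mk.injEq] using this)
  · rw [glueFun_val_lt σ τ i hi, glueFun_val_eq σ τ j hj] at hv
    have := (σ ⟨i, hi⟩).isLt; omega
  · rw [glueFun_val_lt σ τ i hi, glueFun_val_gt σ τ j hj] at hv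
    have := (σ ⟨i, hi⟩).isLt
    have := (τ ⟨(j : ℕ) - a - 1, by have := j.isLt; omega⟩).isLt; omega
  · rw [glueFun_val_eq σ τ i hi, glueFun_val_lt σ τ j hj] at hv
    have := (σ ⟨j, hj⟩).isLt; omega
  · exact Fin.ext (by omega)
  · rw [glueFun_val_eq σ τ i hi, glueFun_val_gt σ τ j hj] at hv
    have := (τ ⟨(j : ℕ) - a - 1, by have := j.isLt; omega⟩).isLt; omega
  · rw [glueFun_val_gt σ τ i hi, glueFun_val_lt σ τ j hj] at hv
    have := (σ ⟨j, hj⟩).isLt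
    have := (τ ⟨(i : ℕ) - a - 1, by have := i.isLt; omega⟩).isLt; omega
  · rw [glueFun_val_gt σ τ i hi, glueFun_val_eq σ τ j hj] at hv
    have := (τ ⟨(i : ℕ) - a - 1, by have := i.isLt; omega⟩).isLt; omega
  · rw [glueFun_val_gt σ τ i hi, glueFun_val_gt σ τ j hj] at hv
    have : τ ⟨(i : ℕ) - a - 1, by have := i.isLt; omega⟩
         = τ ⟨(j : ℕ) - a - 1, by have := j.isLt; omega⟩ := Fin.ext hv
    have := τ.injective this
    simp only [Fin.mk.injEq] at this
    exact Fin.ext (by omega)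

/-- glue two permutations into one of `Fin (a+b+1)`. -/
noncomputable def glue (σ : Equiv.Perm (Fin a)) (τ : Equiv.Perm (Fin b)) : Equiv.Perm (Fin (a+b+1)) :=
  Equiv.ofBijective _ (Finite.injective_iff_bijective.mp (glueFun_inj σ τ))

lemma glue_apply (σ : Equiv.Perm (Fin a)) (τ : Equiv.Perm (Fin b)) (i : Fin (a+b+1)) :
    glue σ τ i = glueFun σ τ i := rfl

lemma glue_avoids {σ : Equiv.Perm (Fin a)} {τ : Equiv.Perm (Fin b)}
    (hσ : avoids132 σ) (hτ : avoids132 τ) : avoids132 (glue σ τ) := by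
  intro i j l hij hjl ⟨h1, h2⟩
  rw [Fin.lt_def] at hij hjl
  have h1' : (glueFun σ τ i : ℕ) < (glueFun σ τ l : ℕ) := h1
  have h2' : (glueFun σ τ l : ℕ) < (glueFun σ τ j : ℕ) := h2
  rcases lt_trichotomy (l : ℕ) a with hl | hl | hl
  · -- all three left
    have hi : (i : ℕ) < a := by omega
    have hj : (j : ℕ) < a := by omega
    rw [glueFun_val_lt σ τ i hi, glueFun_val_lt σ τ l hl] at h1'
    rw [glueFun_val_lt σ τ l hl, glueFun_val_lt σ τ j hj] at h2'
    exact hσ ⟨i, hi⟩ ⟨j, hj⟩ ⟨l, hl⟩ (Fin.mk_lt_mk.mpr hij) (Fin.mk_lt_mk.mpr hjl)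
      ⟨Fin.lt_def.mpr (by omega), Fin.lt_def.mpr (by omega)⟩
  · -- l at top position: glue l is max but must be < glue j
    have hj : (j : ℕ) < a := by omega
    rw [glueFun_val_eq σ τ l hl, glueFun_val_lt σ τ j hj] at h2'
    have := (σ ⟨j, hj⟩).isLt; omega
  · -- l on the right: glue l < b
    have hlv : (glueFun σ τ l : ℕ) < b := by
      rw [glueFun_val_gt σ τ l hl]
      exact (τ _).isLt
    rcases lt_trichotomy (i : ℕ) a with hi | hi | hi
    · rw [glueFun_val_lt σ τ i hi] at h1'; omega
    · rw [glueFun_val_eq σ τ i hi] at h1'; omega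
    · -- all three right
      have hj : a < (j : ℕ) := by omega
      rw [glueFun_val_gt σ τ i hi, glueFun_val_gt σ τ l hl] at h1'
      rw [glueFun_val_gt σ τ l hl, glueFun_val_gt σ τ j hj] at h2'
      exact hτ ⟨(i : ℕ) - a - 1, by have := i.isLt; omega⟩
        ⟨(j : ℕ) - a - 1, by have := j.isLt; omega⟩
        ⟨(l : ℕ) - a - 1, by have := l.isLt; omega⟩
        (Fin.mk_lt_mk.mpr (by omega)) (Fin.mk_lt_mk.mpr (by omega))
        ⟨Fin.lt_def.mpr (by omega), Fin.lt_def.mpr (by omega)⟩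

end GlueDev
section ClassifyDev

variable {a b : ℕ}

lemma mem_AV132 {n : ℕ} {π : Equiv.Perm (Fin n)} : π ∈ AV132 n ↔ avoids132 π := by
  simp [AV132]

lemma pi_lt_of_le_a {π : Equiv.Perm (Fin (a+b+1))} (hav : avoids132 π)
    (hπ : (π ⟨a, by omega⟩ : ℕ) = a + b) (x l : Fin (a+b+1))
    (hx : (x : ℕ) ≤ a) (hl : a < (l : ℕ)) : (π l : ℕ) < (π x : ℕ) := by
  have hne : (π l : ℕ) ≠ a + b := by
    intro h
    have : π l = π ⟨a, by omega⟩ := Fin.ext (by omega)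
    have := π.injective this
    simp only [Fin.ext_iff] at this
    omega
  rcases eq_or_lt_of_le hx with hx' | hx'
  · have : x = ⟨a, by omega⟩ := Fin.ext hx'
    rw [this, hπ]
    have := (π l).isLt; omega
  · have key := hav x ⟨a, by omega⟩ l (Fin.mk_lt_mk.mpr hx') (Fin.lt_def.mpr hl)
    rw [not_and_or] at key
    have hlta : (π l : ℕ) < (π ⟨a, by omega⟩ : ℕ) := by
      have := (π l).isLt; omega
    rcases key with h | h
    · rw [Fin.lt_def, not_lt] at h
      have hne2 : (π x : ℕ) ≠ (π l : ℕ) := by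
        intro he
        have := π.injective (Fin.ext he : π x = π l)
        simp only [Fin.ext_iff] at this
        omega
      omega
    · exact absurd (Fin.lt_def.mpr hlta) h

lemma pi_right_small {π : Equiv.Perm (Fin (a+b+1))} (hav : avoids132 π)
    (hπ : (π ⟨a, by omega⟩ : ℕ) = a + b) (l : Fin (a+b+1)) (hl : a < (l : ℕ)) :
    (π l : ℕ) < b := by
  have hsub : (Finset.Iic (⟨a, by omega⟩ : Fin (a+b+1))).image π ⊆ Finset.Ioi (π l) := by
    intro v hv
    simp only [Finset.mem_image, Finset.mem_Iic] at hv
    obtain ⟨x, hx, rfl⟩ := hv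
    have : (x : ℕ) ≤ a := hx
    exact Finset.mem_Ioi.mpr (Fin.lt_def.mpr (pi_lt_of_le_a hav hπ x l this hl))
  have hcard := Finset.card_le_card hsub
  rw [Finset.card_image_of_injective _ π.injective] at hcard
  rw [Fin.card_Iic, Fin.card_Ioi] at hcard
  have := (π l).isLt
  have hval : ((⟨a, by omega⟩ : Fin (a+b+1)) : ℕ) = a := rfl
  rw [hval] at hcard
  omega

lemma pi_left_big {π : Equiv.Perm (Fin (a+b+1))} (hav : avoids132 π)
    (hπ : (π ⟨a, by omega⟩ : ℕ) = a + b) (i : Fin (a+b+1)) (hi : (i : ℕ) < a) :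
    b ≤ (π i : ℕ) ∧ (π i : ℕ) < a + b := by
  constructor
  · have hsub : (Finset.Ioi (⟨a, by omega⟩ : Fin (a+b+1))).image π ⊆ Finset.Iio (π i) := by
      intro v hv
      simp only [Finset.mem_image, Finset.mem_Ioi] at hv
      obtain ⟨l, hl, rfl⟩ := hv
      have hl' : a < (l : ℕ) := hl
      exact Finset.mem_Iio.mpr (Fin.lt_def.mpr (pi_lt_of_le_a hav hπ i l (by omega) hl'))
    have hcard := Finset.card_le_card hsub
    rw [Finset.card_image_of_injective _ π.injective] at hcard
    have hval : ((⟨a, by omega⟩ : Fin (a+b+1)) : ℕ) = a := rfl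
    rw [Fin.card_Ioi, Fin.card_Iio, hval] at hcard
    omega
  · have : π i ≠ π ⟨a, by omega⟩ := by
      intro h
      have := π.injective h
      simp only [Fin.ext_iff] at this
      omega
    have h2 : (π i : ℕ) ≠ a + b := fun h => this (Fin.ext (by omega))
    have := (π i).isLt
    omega

noncomputable def leftPerm (π : Equiv.Perm (Fin (a+b+1)))
    (h : ∀ i : Fin (a+b+1), (i : ℕ) < a → b ≤ (π i : ℕ) ∧ (π i : ℕ) < a + b) :
    Equiv.Perm (Fin a) :=
  Equiv.ofBijective
    (fun i => ⟨(π ⟨(i : ℕ), by have := i.isLt; omega⟩ : ℕ) - b, by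
      have := h ⟨(i : ℕ), by have := i.isLt; omega⟩ i.isLt; omega⟩)
    (Finite.injective_iff_bijective.mp (by
      intro x y hxy
      simp only [Fin.mk.injEq] at hxy
      have hx := h ⟨(x : ℕ), by have := x.isLt; omega⟩ x.isLt
      have hy := h ⟨(y : ℕ), by have := y.isLt; omega⟩ y.isLt
      have he : π ⟨(x : ℕ), by have := x.isLt; omega⟩
              = π ⟨(y : ℕ), by have := y.isLt; omega⟩ := Fin.ext (by omega)
      have := π.injective he
      simp only [Fin.mk.injEq] at this
      exact Fin.ext this))

lemma leftPerm_val (π : Equiv.Perm (Fin (a+b+1)))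
    (h : ∀ i : Fin (a+b+1), (i : ℕ) < a → b ≤ (π i : ℕ) ∧ (π i : ℕ) < a + b) (i : Fin a) :
    (leftPerm π h i : ℕ) = (π ⟨(i : ℕ), by have := i.isLt; omega⟩ : ℕ) - b := rfl

noncomputable def rightPerm (π : Equiv.Perm (Fin (a+b+1)))
    (h : ∀ l : Fin (a+b+1), a < (l : ℕ) → (π l : ℕ) < b) :
    Equiv.Perm (Fin b) :=
  Equiv.ofBijective
    (fun j => ⟨(π ⟨a + 1 + (j : ℕ), by have := j.isLt; omega⟩ : ℕ),
      h ⟨a + 1 + (j : ℕ), by have := j.isLt; omega⟩ (by simp; omega)⟩)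
    (Finite.injective_iff_bijective.mp (by
      intro x y hxy
      simp only [Fin.mk.injEq] at hxy
      have he : π ⟨a + 1 + (x : ℕ), by have := x.isLt; omega⟩
              = π ⟨a + 1 + (y : ℕ), by have := y.isLt; omega⟩ := Fin.ext hxy
      have := π.injective he
      simp only [Fin.mk.injEq] at this
      exact Fin.ext (by omega)))

lemma rightPerm_val (π : Equiv.Perm (Fin (a+b+1)))
    (h : ∀ l : Fin (a+b+1), a < (l : ℕ) → (π l : ℕ) < b) (j : Fin b) :
    (rightPerm π h j : ℕ) = (π ⟨a + 1 + (j : ℕ), by have := j.isLt; omega⟩ : ℕ) := rfl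

lemma glue_surj {π : Equiv.Perm (Fin (a+b+1))} (hav : avoids132 π)
    (hπ : (π ⟨a, by omega⟩ : ℕ) = a + b) :
    ∃ σ : Equiv.Perm (Fin a), ∃ τ : Equiv.Perm (Fin b),
      avoids132 σ ∧ avoids132 τ ∧ glue σ τ = π := by
  have hbig := fun i hi => pi_left_big hav hπ i hi
  have hsml := fun l hl => pi_right_small hav hπ l hl
  refine ⟨leftPerm π hbig, rightPerm π hsml, ?_, ?_, ?_⟩
  · intro i j l hij hjl ⟨h1, h2⟩
    rw [Fin.lt_def] at hij hjl h1 h2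
    rw [leftPerm_val, leftPerm_val] at h1 h2
    have hi := hbig ⟨(i : ℕ), by have := i.isLt; omega⟩ i.isLt
    have hj := hbig ⟨(j : ℕ), by have := j.isLt; omega⟩ j.isLt
    have hl := hbig ⟨(l : ℕ), by have := l.isLt; omega⟩ l.isLt
    exact hav ⟨(i : ℕ), by have := i.isLt; omega⟩ ⟨(j : ℕ), by have := j.isLt; omega⟩
      ⟨(l : ℕ), by have := l.isLt; omega⟩ (Fin.mk_lt_mk.mpr hij) (Fin.mk_lt_mk.mpr hjl)
      ⟨Fin.lt_def.mpr (by omega), Fin.lt_def.mpr (by omega)⟩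
  · intro i j l hij hjl ⟨h1, h2⟩
    rw [Fin.lt_def] at hij hjl h1 h2
    rw [rightPerm_val, rightPerm_val] at h1 h2
    exact hav ⟨a + 1 + (i : ℕ), by have := i.isLt; omega⟩
      ⟨a + 1 + (j : ℕ), by have := j.isLt; omega⟩
      ⟨a + 1 + (l : ℕ), by have := l.isLt; omega⟩
      (Fin.mk_lt_mk.mpr (by omega)) (Fin.mk_lt_mk.mpr (by omega))
      ⟨Fin.lt_def.mpr (by omega), Fin.lt_def.mpr (by omega)⟩
  · apply Equiv.ext
    intro i
    apply Fin.ext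
    rw [glue_apply]
    rcases lt_trichotomy (i : ℕ) a with hi | hi | hi
    · rw [glueFun_val_lt _ _ i hi, leftPerm_val]
      have hb := hbig ⟨(i : ℕ), by have := i.isLt; omega⟩ hi
      have : (⟨(i : ℕ), by have := i.isLt; omega⟩ : Fin (a+b+1)) = i := Fin.ext rfl
      rw [this] at hb ⊢
      omega
    · rw [glueFun_val_eq _ _ i hi]
      have : (⟨a, by omega⟩ : Fin (a+b+1)) = i := Fin.ext (by simpa using hi.symm)
      rw [← this, hπ]
    · rw [glueFun_val_gt _ _ i hi, rightPerm_val]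
      congr 1
      apply congrArg
      apply Fin.ext
      simp only
      have := i.isLt
      omega

end ClassifyDev
section CountDev

lemma glue_top {a b : ℕ} (σ : Equiv.Perm (Fin a)) (τ : Equiv.Perm (Fin b)) :
    (glue σ τ ⟨a, by omega⟩ : ℕ) = a + b := by
  rw [glue_apply]; exact glueFun_val_eq σ τ _ rfl

lemma glue_val_left {a b : ℕ} (σ : Equiv.Perm (Fin a)) (τ : Equiv.Perm (Fin b)) (x : Fin a) :
    (glue σ τ ⟨(x : ℕ), by have := x.isLt; omega⟩ : ℕ) = b + (σ x : ℕ) := by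
  rw [glue_apply, glueFun_val_lt σ τ _ x.isLt]

lemma glue_val_right {a b : ℕ} (σ : Equiv.Perm (Fin a)) (τ : Equiv.Perm (Fin b)) (x : Fin b) :
    (glue σ τ ⟨a + 1 + (x : ℕ), by have := x.isLt; omega⟩ : ℕ) = (τ x : ℕ) := by
  rw [glue_apply, glueFun_val_gt σ τ _ (by simp; omega)]
  congr 1
  apply congrArg
  apply Fin.ext
  simp only
  omega

lemma fiber_card (a b : ℕ) :
    ((AV132 (a+b+1)).filter (fun π => (π ⟨a, by omega⟩ : ℕ) = a + b)).card
      = (AV132 a).card * (AV132 b).card := by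
  rw [← Finset.card_product]
  refine (Finset.card_bij (fun p _ => glue p.1 p.2) ?_ ?_ ?_).symm
  · rintro ⟨σ, τ⟩ hp
    simp only [Finset.mem_product, mem_AV132] at hp
    simp only [Finset.mem_filter, mem_AV132]
    exact ⟨glue_avoids hp.1 hp.2, glue_top σ τ⟩
  · rintro ⟨σ, τ⟩ hp ⟨σ', τ'⟩ hp' he
    simp only [Prod.mk.injEq]
    constructor
    · apply Equiv.ext; intro x; apply Fin.ext
      have h := congrArg (fun g : Equiv.Perm (Fin (a+b+1)) =>
        (g ⟨(x : ℕ), by have := x.isLt; omega⟩ : ℕ)) he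
      simp only [glue_val_left] at h
      omega
    · apply Equiv.ext; intro x; apply Fin.ext
      have h := congrArg (fun g : Equiv.Perm (Fin (a+b+1)) =>
        (g ⟨a + 1 + (x : ℕ), by have := x.isLt; omega⟩ : ℕ)) he
      simp only [glue_val_right] at h
      exact h
  · intro π hπ
    simp only [Finset.mem_filter, mem_AV132] at hπ
    obtain ⟨σ, τ, hσ, hτ, he⟩ := glue_surj hπ.1 hπ.2
    exact ⟨(σ, τ), Finset.mem_product.mpr ⟨mem_AV132.mpr hσ, mem_AV132.mpr hτ⟩, he⟩

lemma fiber_card' (m : ℕ) (k : Fin (m+1)) :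
    ((AV132 (m+1)).filter (fun π => π.symm (Fin.last m) = k)).card
      = (AV132 (k : ℕ)).card * (AV132 (m - (k : ℕ))).card := by
  obtain ⟨a, ha⟩ := k
  obtain ⟨b, rfl⟩ : ∃ b, m = a + b := ⟨m - a, by omega⟩
  show ((AV132 (a+b+1)).filter (fun π => π.symm (Fin.last (a+b)) = ⟨a, ha⟩)).card
      = (AV132 a).card * (AV132 (a + b - a)).card
  rw [Nat.add_sub_cancel_left, ← fiber_card a b]
  congr 1
  apply Finset.filter_congr
  intro π _
  rw [Equiv.symm_apply_eq]
  constructor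
  · intro h
    have := congrArg Fin.val h
    simpa using this.symm
  · intro h
    apply Fin.ext
    simpa using h.symm

end CountDev
/-- The number of 132-avoiding permutations of `{1,…,n}` is the `n`-th Catalan
number. -/
theorem card_AV132 (n : ℕ) : (AV132 n).card = catalan n := by
  induction n using Nat.strong_induction_on with
  | _ n ih =>
    match n with
    | 0 =>
      rw [catalan_zero]
      rw [AV132, Finset.filter_true_of_mem (fun π _ => show avoids132 π from fun i _ _ _ _ => i.elim0)]
      simp
    | m + 1 =>
      rw [catalan_succ]
      rw [Finset.card_eq_sum_card_fiberwise
        (f := fun π : Equiv.Perm (Fin (m+1)) => π.symm (Fin.last m))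
        (t := Finset.univ) (fun π _ => Finset.mem_univ _)]
      apply Finset.sum_congr rfl
      intro k _
      rw [fiber_card' m k, ih k (by have := k.isLt; omega), ih (m - k) (by omega)]
end

section
/- The number of 123-avoiding permutations of {1,…,n} equals the n-th Catalan number c_n. -/
open Finset

/-!
A permutation `π` of `Fin n` is sent to its sequence of running minima `mᵢ = min_{j ≤ i} π j`,
an antitone sequence with `mᵢ + i < n`. A 123-avoiding permutation is determined by it: at the
first position where two of them differ, the larger value would complete a `123`. Conversely
every such sequence occurs: keep its records (the positions where it strictly drops) and fill the
remaining positions with the unused values in decreasing order; the bound `mᵢ + i < n` leaves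
enough large unused values for these to stay above the running minimum. Finally, splitting such a
sequence at its first contact with the bound shows that these sequences satisfy the Catalan
recurrence.
-/

section RunningMin

variable {ι α : Type*} [Preorder ι] [LocallyFiniteOrderBot ι] [LinearOrder α]

def runningMin (f : ι → α) (i : ι) : α := (Iic i).inf' nonempty_Iic f

lemma runningMin_le (f : ι → α) {i j : ι} (h : j ≤ i) : runningMin f i ≤ f j :=
  inf'_le f (mem_Iic.2 h)

lemma le_runningMin {f : ι → α} {i : ι} {a : α} (h : ∀ j ≤ i, a ≤ f j) : a ≤ runningMin f i :=
  le_inf' _ _ fun j hj => h j (mem_Iic.1 hj)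

lemma exists_le_eq_runningMin (f : ι → α) (i : ι) : ∃ j ≤ i, f j = runningMin f i := by
  obtain ⟨j, hj, h⟩ := exists_mem_eq_inf' (nonempty_Iic (a := i)) f
  exact ⟨j, mem_Iic.1 hj, h.symm⟩

lemma antitone_runningMin (f : ι → α) : Antitone (runningMin f) := fun _ _ hij =>
  le_runningMin fun _ hj => runningMin_le f (hj.trans hij)

end RunningMin

section Permutations

variable {n : ℕ}

lemma runningMin_add_lt (π : Equiv.Perm (Fin n)) (i : Fin n) :
    runningMin (fun j => (π j : ℕ)) i + i < n := by
  have hm := (runningMin_le (fun j => (π j : ℕ)) (le_refl i)).trans_lt (π i).isLt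
  have hsub : (Iic i).image π ⊆ Ici ⟨_, hm⟩ := by
    intro x hx
    obtain ⟨j, hj, rfl⟩ := mem_image.1 hx
    exact mem_Ici.2 (runningMin_le (fun j => (π j : ℕ)) (mem_Iic.1 hj))
  have := card_le_card hsub
  rw [card_image_of_injective _ π.injective, Fin.card_Iic, Fin.card_Ici] at this
  dsimp only at this
  omega

/-- The running minimum of `τ` at `i` is attained at some `q < i`; then `q`, `i` and the
position of `τ i` in `π` form a `123` in `π`. -/
lemma not_lt_of_runningMin_eq {π τ : Equiv.Perm (Fin n)} (hπ : avoids123 π) {i : Fin n}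
    (hagree : ∀ j < i, π j = τ j)
    (hmin : runningMin (fun j => (π j : ℕ)) i = runningMin (fun j => (τ j : ℕ)) i) :
    ¬ π i < τ i := by
  intro hlt
  obtain ⟨q, hqi, hq⟩ := exists_le_eq_runningMin (fun j => (τ j : ℕ)) i
  have hπi := runningMin_le (fun j => (π j : ℕ)) (le_refl i)
  have hqi : q < i := lt_of_le_of_ne hqi fun h => by
    subst h; simp only [Fin.lt_def] at hlt; omega
  have hπq : π q < π i := by
    rw [hagree q hqi, Fin.lt_def, hq, ← hmin]
    exact lt_of_le_of_ne hπi fun h => hqi.ne (π.injective (Fin.ext (by rw [hagree q hqi]; omega)))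
  obtain ⟨j, hπj⟩ := π.surjective (τ i)
  have hij : i < j := by
    refine lt_of_not_ge fun hji => ?_
    rcases hji.lt_or_eq with hji | rfl
    · exact hji.ne (τ.injective (by rw [← hagree j hji, hπj]))
    · exact hlt.ne hπj
  exact hπ q i j hqi hij ⟨hπq, hπj ▸ hlt⟩

lemma eq_of_runningMin_eq {π τ : Equiv.Perm (Fin n)} (hπ : avoids123 π) (hτ : avoids123 τ)
    (h : runningMin (fun j => (π j : ℕ)) = runningMin (fun j => (τ j : ℕ))) : π = τ := by
  refine Equiv.ext fun i => WellFoundedLT.induction i fun i ih => le_antisymm ?_ ?_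
  · exact not_lt.1 (not_lt_of_runningMin_eq hτ (fun j hj => (ih j hj).symm) (congrFun h i).symm)
  · exact not_lt.1 (not_lt_of_runningMin_eq hπ ih (congrFun h i))

end Permutations

section Records

variable {ι α : Type*} [Fintype ι] [LinearOrder ι] [LinearOrder α] (f : ι → α)

def records : Finset ι := {i | ∀ j < i, f i < f j}

variable {f}

lemma mem_records {i : ι} : i ∈ records f ↔ ∀ j < i, f i < f j := by
  simp [records]

lemma injOn_records : Set.InjOn f (records f) := by
  intro a ha b hb hab
  rcases lt_trichotomy a b with h | h | h
  · exact absurd hab (mem_records.1 hb a h).ne'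
  · exact h
  · exact absurd hab (mem_records.1 ha b h).ne

lemma exists_mem_records_le_eq (hf : Antitone f) (i : ι) :
    ∃ p ∈ records f, p ≤ i ∧ f p = f i := by
  obtain ⟨p, hp, hmin⟩ := ({j | f j = f i} : Finset ι).exists_minimal ⟨i, by simp⟩
  have hpi : f p = f i := (mem_filter.1 hp).2
  refine ⟨p, mem_records.2 fun k hk => ?_, ?_, hpi⟩
  · refine lt_of_le_of_ne (hf hk.le) fun h => ?_
    exact hk.not_ge (hmin (by simp [← h, hpi]) hk.le)
  · exact not_lt.1 fun h => h.not_ge (hmin (by simp) h.le)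

end Records

section Realization

variable {n : ℕ} (f : Fin n → ℕ)

def recordValues : Finset ℕ := (records f).image f

/-- Records keep their value; the other positions receive the values not taken by records, in
decreasing order. -/
noncomputable def realize (i : Fin n) : ℕ :=
  if i ∈ records f then f i
  else Nat.nth (· ∉ recordValues f) #{j ∈ Ioi i | j ∉ records f}

variable {f}

lemma infinite_notMem_recordValues : (Set.ofPred (· ∉ recordValues f)).Infinite :=
  (recordValues f).finite_toSet.infinite_compl

lemma count_notMem_recordValues_add (a : ℕ) :
    Nat.count (· ∉ recordValues f) a + #{v ∈ recordValues f | v < a} = a := by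
  have h : {v ∈ recordValues f | v < a} = {v ∈ range a | v ∈ recordValues f} := by
    ext v; simp [and_comm]
  rw [Nat.count_eq_card_filter_range, h, add_comm, card_filter_add_card_filter_not, card_range]

lemma realize_of_mem {i : Fin n} (hi : i ∈ records f) : realize f i = f i := if_pos hi

lemma realize_of_notMem {i : Fin n} (hi : i ∉ records f) :
    realize f i = Nat.nth (· ∉ recordValues f) #{j ∈ Ioi i | j ∉ records f} := if_neg hi

lemma realize_mem_recordValues {i : Fin n} (hi : i ∈ records f) :
    realize f i ∈ recordValues f := by
  rw [realize_of_mem hi]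
  exact mem_image_of_mem f hi

lemma realize_notMem_recordValues {i : Fin n} (hi : i ∉ records f) :
    realize f i ∉ recordValues f := by
  rw [realize_of_notMem hi]
  exact Nat.nth_mem_of_infinite infinite_notMem_recordValues _

lemma realize_lt_realize {i j : Fin n} (hi : i ∉ records f) (hj : j ∉ records f) (hij : i < j) :
    realize f j < realize f i := by
  rw [realize_of_notMem hi, realize_of_notMem hj, Nat.nth_lt_nth infinite_notMem_recordValues]
  refine card_lt_card ((ssubset_iff_of_subset fun k hk => ?_).2 ⟨j, by simp [hij, hj], by simp⟩)
  simp only [mem_filter, mem_Ioi] at hk ⊢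
  exact ⟨hij.trans hk.1, hk.2⟩

lemma realize_injective : Function.Injective (realize f) := by
  intro a b hab
  by_cases ha : a ∈ records f <;> by_cases hb : b ∈ records f
  · exact injOn_records ha hb (by rwa [realize_of_mem ha, realize_of_mem hb] at hab)
  · exact absurd (hab ▸ realize_mem_recordValues ha) (realize_notMem_recordValues hb)
  · exact absurd (hab ▸ realize_mem_recordValues hb) (realize_notMem_recordValues ha)
  · rcases lt_trichotomy a b with h | h | h
    · exact absurd hab (realize_lt_realize ha hb h).ne'
    · exact h
    · exact absurd hab (realize_lt_realize hb ha h).ne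

variable (hfn : ∀ i, f i + i < n)
include hfn

lemma realize_lt (i : Fin n) : realize f i < n := by
  by_cases hi : i ∈ records f
  · rw [realize_of_mem hi]; have := hfn i; omega
  rw [realize_of_notMem hi]
  refine Nat.nth_lt_of_lt_count ?_
  have hcount := count_notMem_recordValues_add (f := f) n
  have hV : #(recordValues f) = #(records f) := card_image_of_injOn injOn_records
  rw [filter_true_of_mem fun v hv => by obtain ⟨p, -, rfl⟩ := mem_image.1 hv; have := hfn p; omega,
    hV] at hcount
  have hrank : #{j ∈ Ioi i | j ∉ records f} < #(records f)ᶜ :=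
    card_lt_card ((ssubset_iff_of_subset fun j hj => by simp_all).2 ⟨i, by simpa, by simp⟩)
  have := card_add_card_compl (records f)
  rw [Fintype.card_fin] at this
  omega

/-- The unused values `≤ f i` are at most as many as the non-records after `i`: records take the
value `f i` and, after `i`, distinct values below `f i`. -/
lemma lt_realize (hf : Antitone f) {i : Fin n} (hi : i ∉ records f) : f i < realize f i := by
  rw [realize_of_notMem hi, ← not_le, ← Nat.lt_add_one_iff,
    ← Nat.lt_nth_iff_count_lt infinite_notMem_recordValues, not_lt]
  obtain ⟨p₀, hp₀, hp₀i, hfp₀⟩ := exists_mem_records_le_eq hf i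
  have hp₀lt : p₀ < i := lt_of_le_of_ne hp₀i (by rintro rfl; exact hi hp₀)
  have hsub : (insert p₀ {j ∈ Ioi i | j ∈ records f}).image f ⊆
      {v ∈ recordValues f | v < f i + 1} := by
    intro v hv
    obtain ⟨p, hp, rfl⟩ := mem_image.1 hv
    rcases mem_insert.1 hp with rfl | hp
    · exact mem_filter.2 ⟨mem_image_of_mem f hp₀, by omega⟩
    · obtain ⟨hip, hp⟩ := mem_filter.1 hp
      have := mem_records.1 hp i (mem_Ioi.1 hip)
      exact mem_filter.2 ⟨mem_image_of_mem f hp, by omega⟩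
  have hcard : #((insert p₀ {j ∈ Ioi i | j ∈ records f}).image f) =
      #{j ∈ Ioi i | j ∈ records f} + 1 := by
    rw [card_image_of_injOn (injOn_records.mono ?_), card_insert_of_notMem]
    · simp [hp₀lt.le]
    · intro p hp
      rcases mem_insert.1 hp with rfl | hp
      · exact hp₀
      · exact (mem_filter.1 hp).2
  have hsplit : #{j ∈ Ioi i | j ∈ records f} + #{j ∈ Ioi i | j ∉ records f} = n - 1 - i := by
    rw [card_filter_add_card_filter_not, Fin.card_Ioi]
  have hcount := count_notMem_recordValues_add (f := f) (f i + 1)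
  have := card_le_card hsub
  have := hfn i
  omega

lemma le_realize (hf : Antitone f) (i : Fin n) : f i ≤ realize f i := by
  by_cases hi : i ∈ records f
  · exact (realize_of_mem hi).ge
  · exact (lt_realize hfn hf hi).le

lemma runningMin_realize (hf : Antitone f) : runningMin (realize f) = f := by
  funext i
  obtain ⟨p, hp, hpi, hfp⟩ := exists_mem_records_le_eq hf i
  refine le_antisymm ?_ (le_runningMin fun j hj => (hf hj).trans (le_realize hfn hf j))
  calc runningMin (realize f) i ≤ realize f p := runningMin_le _ hpi
    _ = f i := by rw [realize_of_mem hp, hfp]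

lemma not_realize_lt_lt (hf : Antitone f) {q i j : Fin n} (hqi : q < i) (hij : i < j) :
    ¬ (realize f q < realize f i ∧ realize f i < realize f j) := by
  rintro ⟨h₁, h₂⟩
  by_cases hj : j ∈ records f
  · have := le_realize hfn hf i
    have := hf hij.le
    rw [realize_of_mem hj] at h₂
    omega
  by_cases hi : i ∈ records f
  · have := le_realize hfn hf q
    have := hf hqi.le
    rw [realize_of_mem hi] at h₁
    omega
  exact (realize_lt_realize hi hj hij).not_gt h₂

theorem exists_avoids123_runningMin_eq (hf : Antitone f) :
    ∃ π : Equiv.Perm (Fin n), avoids123 π ∧ runningMin (fun j => (π j : ℕ)) = f := by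
  let g : Fin n → Fin n := fun i => ⟨realize f i, realize_lt hfn i⟩
  have hg : g.Injective := fun a b h => realize_injective (congrArg Fin.val h)
  exact ⟨Equiv.ofBijective g hg.bijective_of_finite,
    fun q i j hqi hij => not_realize_lt_lt hfn hf hqi hij, runningMin_realize hfn hf⟩

end Realization

section Stairs

def stairs (n : ℕ) : Finset (Fin n → ℕ) :=
  {f ∈ Fintype.piFinset fun _ => range n | Antitone f ∧ ∀ i, f i + i < n}

lemma mem_stairs {n : ℕ} {f : Fin n → ℕ} : f ∈ stairs n ↔ Antitone f ∧ ∀ i, f i + i < n := by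
  simp only [stairs, mem_filter, Fintype.mem_piFinset, mem_range, and_iff_right_iff_imp]
  exact fun h i => by have := h.2 i; omega

lemma card_stairs_zero : #(stairs 0) = 1 :=
  card_eq_one.2 ⟨finZeroElim, eq_singleton_iff_unique_mem.2
    ⟨mem_stairs.2 ⟨fun i => i.elim0, fun i => i.elim0⟩, fun _ _ => Subsingleton.elim _ _⟩⟩

variable {n : ℕ}

def stairsFirstReturn (n : ℕ) (k : Fin (n + 1)) : Finset (Fin (n + 1) → ℕ) :=
  {F ∈ stairs (n + 1) | F k + k = n ∧ ∀ i < k, F i + i < n}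

lemma stairs_succ_eq_biUnion : stairs (n + 1) = univ.biUnion (stairsFirstReturn n) := by
  refine Subset.antisymm (fun F hF => ?_) (biUnion_subset.2 fun k _ => filter_subset _ _)
  have hbound := (mem_stairs.1 hF).2
  have hlast : F (Fin.last n) + Fin.last n = n := by
    have := hbound (Fin.last n)
    rw [Fin.val_last] at this ⊢
    omega
  obtain ⟨k, hk, hmin⟩ := ({i | F i + i = n} : Finset (Fin (n + 1))).exists_minimal
    ⟨Fin.last n, by simpa using hlast⟩
  refine mem_biUnion.2 ⟨k, mem_univ _, mem_filter.2 ⟨hF, (mem_filter.1 hk).2, fun i hi => ?_⟩⟩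
  have := hbound i
  exact lt_of_le_of_ne (by omega) fun h => hi.not_ge (hmin (by simp [h]) hi.le)

lemma pairwiseDisjoint_stairsFirstReturn :
    (↑(univ : Finset (Fin (n + 1))) : Set (Fin (n + 1))).PairwiseDisjoint
      (stairsFirstReturn n) := by
  intro k _ l _ hkl
  refine disjoint_left.2 fun F hk hl => ?_
  obtain ⟨-, hk, hk'⟩ := mem_filter.1 hk
  obtain ⟨-, hl, hl'⟩ := mem_filter.1 hl
  rcases lt_or_gt_of_ne hkl with h | h
  · exact (hl' k h).ne hk
  · exact (hk' l h).ne hl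

def splitAt (k : Fin (n + 1)) (F : Fin (n + 1) → ℕ) : (Fin k → ℕ) × (Fin (n - k) → ℕ) :=
  (fun i => F (Fin.castLE k.isLt.le i) - (n - k), fun j => F ⟨k + 1 + j, by omega⟩)

def joinAt (k : Fin (n + 1)) (p : (Fin k → ℕ) × (Fin (n - k) → ℕ)) (i : Fin (n + 1)) : ℕ :=
  if h : (i : ℕ) < k then p.1 ⟨i, h⟩ + (n - k)
  else if h' : (i : ℕ) = k then n - k
  else p.2 ⟨i - k - 1, by omega⟩

section JoinAt

variable {k : Fin (n + 1)} (p : (Fin k → ℕ) × (Fin (n - k) → ℕ)) {i : Fin (n + 1)}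

lemma joinAt_of_lt (h : (i : ℕ) < k) : joinAt k p i = p.1 ⟨i, h⟩ + (n - k) := dif_pos h

lemma joinAt_of_eq (h : (i : ℕ) = k) : joinAt k p i = n - k := by
  rw [joinAt, dif_neg (by omega), dif_pos h]

lemma joinAt_of_gt (h : (k : ℕ) < i) : joinAt k p i = p.2 ⟨i - k - 1, by omega⟩ := by
  rw [joinAt, dif_neg (by omega), dif_neg (by omega)]

end JoinAt

lemma splitAt_joinAt (k : Fin (n + 1)) (p : (Fin k → ℕ) × (Fin (n - k) → ℕ)) :
    splitAt k (joinAt k p) = p := by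
  ext i
  · simp [splitAt, joinAt_of_lt p (i := Fin.castLE k.isLt.le i) i.isLt]
  · simp only [splitAt]
    rw [joinAt_of_gt p (by simp only; omega)]
    exact congrArg p.2 (Fin.ext (by simp only; omega))

lemma joinAt_splitAt {k : Fin (n + 1)} {F : Fin (n + 1) → ℕ} (hF : F ∈ stairsFirstReturn n k) :
    joinAt k (splitAt k F) = F := by
  obtain ⟨hF, hk, -⟩ := mem_filter.1 hF
  have hanti := (mem_stairs.1 hF).1
  funext i
  rcases lt_trichotomy (i : ℕ) k with h | h | h
  · rw [joinAt_of_lt _ h]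
    have : F k ≤ F i := hanti (Fin.le_def.2 h.le)
    show F i - (n - k) + (n - k) = F i
    omega
  · rw [joinAt_of_eq _ h, Fin.ext h]; omega
  · rw [joinAt_of_gt _ h]
    exact congrArg F (Fin.ext (by simp only; omega))

lemma splitAt_mem {k : Fin (n + 1)} {F : Fin (n + 1) → ℕ} (hF : F ∈ stairsFirstReturn n k) :
    splitAt k F ∈ stairs k ×ˢ stairs (n - k) := by
  obtain ⟨hF, -, hbefore⟩ := mem_filter.1 hF
  obtain ⟨hanti, hbound⟩ := mem_stairs.1 hF
  refine mem_product.2 ⟨mem_stairs.2 ⟨fun i j hij => ?_, fun i => ?_⟩,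
    mem_stairs.2 ⟨fun i j hij => ?_, fun j => ?_⟩⟩
  · exact Nat.sub_le_sub_right (hanti ((Fin.castLE_le_castLE_iff _).2 hij)) _
  · have := hbefore (Fin.castLE k.isLt.le i) (Fin.lt_def.2 i.isLt)
    simp only [splitAt, Fin.val_castLE] at this ⊢
    omega
  · exact hanti (Fin.le_def.2 (by simp only; have := Fin.le_def.1 hij; omega))
  · have := hbound ⟨k + 1 + j, by omega⟩
    simp only [splitAt] at this ⊢
    omega

lemma joinAt_mem {k : Fin (n + 1)} {p : (Fin k → ℕ) × (Fin (n - k) → ℕ)}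
    (hp : p ∈ stairs k ×ˢ stairs (n - k)) : joinAt k p ∈ stairsFirstReturn n k := by
  obtain ⟨hg, hh⟩ := mem_product.1 hp
  obtain ⟨hganti, hgb⟩ := mem_stairs.1 hg
  obtain ⟨hhanti, hhb⟩ := mem_stairs.1 hh
  have hleft : ∀ i : Fin (n + 1), (i : ℕ) ≤ k → n - k ≤ joinAt k p i := by
    intro i hi
    rcases hi.lt_or_eq with hi | hi
    · rw [joinAt_of_lt _ hi]; omega
    · rw [joinAt_of_eq _ hi]
  have hright : ∀ i : Fin (n + 1), (k : ℕ) ≤ i → joinAt k p i ≤ n - k := by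
    intro i hi
    rcases hi.lt_or_eq with hi | hi
    · rw [joinAt_of_gt _ hi]; have := hhb ⟨i - k - 1, by omega⟩; omega
    · rw [joinAt_of_eq _ hi.symm]
  have hanti : Antitone (joinAt k p) := by
    intro i j hij
    have hij := Fin.le_def.1 hij
    rcases lt_or_ge (j : ℕ) k with hj | hj
    · rw [joinAt_of_lt _ hj, joinAt_of_lt _ (lt_of_le_of_lt hij hj)]
      exact Nat.add_le_add_right (hganti (Fin.le_def.2 hij)) _
    rcases le_or_gt (i : ℕ) k with hi | hi
    · exact (hright j hj).trans (hleft i hi)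
    · rw [joinAt_of_gt _ hi, joinAt_of_gt _ (by omega)]
      exact hhanti (Fin.le_def.2 (by simp only; omega))
  have hbound : ∀ i : Fin (n + 1), joinAt k p i + i < n + 1 := by
    intro i
    rcases lt_trichotomy (i : ℕ) k with h | h | h
    · rw [joinAt_of_lt _ h]; have := hgb ⟨i, h⟩; simp only at this; omega
    · rw [joinAt_of_eq _ h]; omega
    · rw [joinAt_of_gt _ h]; have := hhb ⟨i - k - 1, by omega⟩; simp only at this; omega
  refine mem_filter.2 ⟨mem_stairs.2 ⟨hanti, hbound⟩, by rw [joinAt_of_eq _ rfl]; omega,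
    fun i hi => ?_⟩
  rw [joinAt_of_lt _ hi]
  have := hgb ⟨i, hi⟩
  simp only at this
  omega

lemma card_stairsFirstReturn (k : Fin (n + 1)) :
    #(stairsFirstReturn n k) = #(stairs k) * #(stairs (n - k)) := by
  rw [← card_product]
  exact card_nbij' (splitAt k) (joinAt k) (fun _ hF => splitAt_mem hF) (fun _ hp => joinAt_mem hp)
    (fun _ hF => joinAt_splitAt hF) (fun p _ => splitAt_joinAt k p)

lemma card_stairs_succ (n : ℕ) :
    #(stairs (n + 1)) = ∑ k : Fin (n + 1), #(stairs k) * #(stairs (n - k)) := by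
  rw [stairs_succ_eq_biUnion, card_biUnion pairwiseDisjoint_stairsFirstReturn]
  exact sum_congr rfl fun k _ => card_stairsFirstReturn k

theorem card_stairs (n : ℕ) : #(stairs n) = catalan n := by
  induction n using Nat.strong_induction_on with
  | _ n ih =>
    cases n with
    | zero => rw [card_stairs_zero, catalan_zero]
    | succ n =>
      rw [card_stairs_succ, catalan_succ]
      exact sum_congr rfl fun k _ => by rw [ih k (by omega), ih (n - k) (by omega)]

end Stairs

theorem card_AV123_eq_card_stairs (n : ℕ) : #(AV123 n) = #(stairs n) := by
  refine card_nbij (fun π => runningMin fun j => (π j : ℕ)) (fun π _ => ?_)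
    (fun π hπ τ hτ h => ?_) (fun f hf => ?_)
  · exact mem_stairs.2 ⟨antitone_runningMin _, runningMin_add_lt π⟩
  · exact eq_of_runningMin_eq (mem_filter.1 hπ).2 (mem_filter.1 hτ).2 h
  · obtain ⟨hanti, hbound⟩ := mem_stairs.1 hf
    obtain ⟨π, hπ, h⟩ := exists_avoids123_runningMin_eq hbound hanti
    exact ⟨π, mem_filter.2 ⟨mem_univ _, hπ⟩, h⟩

/-- The number of 123-avoiding permutations of `{1,…,n}` is the `n`-th Catalan
number. -/
theorem card_AV123 (n : ℕ) : (AV123 n).card = catalan n := by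
  rw [card_AV123_eq_card_stairs, card_stairs]
end

section
/- The polynomials P_n(t) = ∑_{π ∈ AV₁₃₂(n)} t^{a₁₂(π)}, where a₁₂(π) is the number of non-inversions (pairs i<j with π_i < π_j), satisfy the recurrence P_n(t) = ∑_{k=1}^{n} t^{k-1} P_{k-1}(t) P_{n-k}(t) with P_0(t) = 1. -/
open Finset

open Polynomial

/-- The weight enumerator of 132-avoiding permutations by non-inversions. -/
noncomputable def P12 (n : ℕ) : Polynomial ℤ :=
  ∑ π ∈ AV132 n, (Polynomial.X : Polynomial ℤ) ^ a12 π


/-!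
In a 132-avoiding permutation of `{1,…,n}` every entry to the left of the maximum `n` exceeds
every entry to its right, since otherwise these two entries form a 132 together with `n`.
So if `n` stands in position `k`, then `π = (σ ⊕ 1) ⊖ τ` with `σ ∈ AV₁₃₂(k-1)`, `τ ∈ AV₁₃₂(n-k)`,
and conversely every such permutation avoids 132. A skew sum adds the non-inversions of its
summands, while `σ ⊕ 1` has the `k - 1` further non-inversions formed with the maximum; this is
the term `t^{k-1} P_{k-1} P_{n-k}`.
-/

namespace Fin

variable {m n : ℕ}

@[simp] lemma castAdd_lt_castAdd_iff {i j : Fin m} : castAdd n i < castAdd n j ↔ i < j := .rfl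

@[simp] lemma castAdd_lt_natAdd (i : Fin m) (j : Fin n) : castAdd n i < natAdd m j := by
  simp [Fin.lt_def]; omega

@[simp] lemma not_natAdd_lt_castAdd (i : Fin m) (j : Fin n) : ¬natAdd m j < castAdd n i :=
  (castAdd_lt_natAdd i j).not_gt

lemma le_of_forall_lt_of_injective {f : Fin m → Fin n} (hf : Function.Injective f) {v : Fin n}
    (h : ∀ j, f j < v) : m ≤ v := by
  simpa using Fintype.card_le_of_injective (fun j => (⟨f j, h j⟩ : Fin v))
    fun a b hab => hf (Fin.ext (Fin.mk.inj hab))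

end Fin

namespace Equiv.Perm

variable {m n : ℕ}

/-- The direct sum `σ ⊕ τ`: `τ` acts on the last `n` positions and values. -/
def directSum (σ : Perm (Fin m)) (τ : Perm (Fin n)) : Perm (Fin (m + n)) :=
  finSumFinEquiv.symm.trans ((σ.sumCongr τ).trans finSumFinEquiv)

/-- The skew sum `σ ⊖ τ`: `σ` sends the first `m` positions to the largest `m` values. -/
def skewSum (σ : Perm (Fin m)) (τ : Perm (Fin n)) : Perm (Fin (m + n)) :=
  (directSum σ τ).trans (finAddFlip.trans (finCongr (Nat.add_comm n m)))

section apply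

variable (σ : Perm (Fin m)) (τ : Perm (Fin n))

@[simp] lemma directSum_castAdd (i : Fin m) :
    directSum σ τ (Fin.castAdd n i) = Fin.castAdd n (σ i) := by
  simp [directSum]

@[simp] lemma directSum_natAdd (j : Fin n) :
    directSum σ τ (Fin.natAdd m j) = Fin.natAdd m (τ j) := by
  simp [directSum]

@[simp] lemma skewSum_castAdd (i : Fin m) :
    skewSum σ τ (Fin.castAdd n i) = (Fin.natAdd n (σ i)).cast (Nat.add_comm n m) := by
  simp [skewSum, finAddFlip_apply_castAdd]

@[simp] lemma skewSum_natAdd (j : Fin n) :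
    skewSum σ τ (Fin.natAdd m j) = (Fin.castAdd m (τ j)).cast (Nat.add_comm n m) := by
  simp [skewSum, finAddFlip_apply_natAdd]

end apply

lemma directSum_injective2 : Function.Injective2 (directSum (m := m) (n := n)) := by
  intro σ σ' τ τ' h
  refine ⟨Equiv.ext fun i => ?_, Equiv.ext fun j => ?_⟩
  · simpa using DFunLike.congr_fun h (Fin.castAdd n i)
  · simpa using DFunLike.congr_fun h (Fin.natAdd m j)

lemma skewSum_injective2 : Function.Injective2 (skewSum (m := m) (n := n)) := by
  intro σ σ' τ τ' h
  refine ⟨Equiv.ext fun i => ?_, Equiv.ext fun j => ?_⟩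
  · simpa using DFunLike.congr_fun h (Fin.castAdd n i)
  · simpa using DFunLike.congr_fun h (Fin.natAdd m j)

lemma exists_directSum_eq (π : Perm (Fin (m + n))) (h : ∀ i, (π (Fin.castAdd n i) : ℕ) < m) :
    ∃ σ τ, directSum σ τ = π := by
  set ρ : Perm (Fin m ⊕ Fin n) := finSumFinEquiv.trans (π.trans finSumFinEquiv.symm)
  have hinl : Set.MapsTo ρ (Set.range Sum.inl) (Set.range Sum.inl) := by
    rintro _ ⟨i, rfl⟩
    exact ⟨(π (Fin.castAdd n i)).castLT (h i), by simp [ρ, eq_comm, Equiv.symm_apply_eq]⟩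
  obtain ⟨⟨σ, τ⟩, hστ⟩ := mem_sumCongrHom_range_of_perm_mapsTo_inl hinl
  refine ⟨σ, τ, ?_⟩
  rw [directSum, show σ.sumCongr τ = ρ from hστ]
  ext
  simp [ρ]

lemma exists_skewSum_eq (π : Perm (Fin (m + n))) (h : ∀ i, n ≤ (π (Fin.castAdd n i) : ℕ)) :
    ∃ σ τ, skewSum σ τ = π := by
  set e : Fin (m + n) ≃ Fin (m + n) := finAddFlip.trans (finCongr (Nat.add_comm n m))
  obtain ⟨σ, τ, hστ⟩ := exists_directSum_eq (π.trans e.symm) fun i => by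
    have hi := h i
    have hlt := (π (Fin.castAdd n i)).isLt
    have he : e.symm (π (Fin.castAdd n i)) = Fin.castAdd n ⟨π (Fin.castAdd n i) - n, by omega⟩ := by
      rw [Equiv.symm_apply_eq, Equiv.trans_apply, finAddFlip_apply_castAdd, Fin.ext_iff]
      simp
      omega
    rw [Equiv.trans_apply, he, Fin.val_castAdd]
    omega
  exact ⟨σ, τ, by rw [skewSum, hστ, Equiv.trans_assoc, Equiv.symm_trans_self, Equiv.trans_refl]⟩

lemma val_inv_apply_eq_iff (π : Perm (Fin n)) (v x : Fin n) :
    ((π⁻¹ v : Fin n) : ℕ) = x ↔ (π x : ℕ) = v := by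
  rw [Fin.val_inj, inv_eq_iff_eq, eq_comm, Fin.val_inj]

end Equiv.Perm

open Equiv.Perm

lemma a12_eq_sum {n : ℕ} (π : Equiv.Perm (Fin n)) :
    a12 π = ∑ i, ∑ j, if i < j ∧ π i < π j then 1 else 0 := by
  rw [a12, card_filter, Fintype.sum_prod_type]

lemma a12_directSum {m n : ℕ} (σ : Equiv.Perm (Fin m)) (τ : Equiv.Perm (Fin n)) :
    a12 (directSum σ τ) = a12 σ + a12 τ + m * n := by
  simp only [a12_eq_sum, Fin.sum_univ_add, directSum_castAdd, directSum_natAdd]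
  simp [sum_add_distrib]
  ring

lemma a12_skewSum {m n : ℕ} (σ : Equiv.Perm (Fin m)) (τ : Equiv.Perm (Fin n)) :
    a12 (skewSum σ τ) = a12 σ + a12 τ := by
  simp only [a12_eq_sum, Fin.sum_univ_add, skewSum_castAdd, skewSum_natAdd, Fin.cast_lt_cast,
    Fin.castAdd_lt_castAdd_iff, Fin.natAdd_lt_natAdd_iff, Fin.castAdd_lt_natAdd,
    Fin.not_natAdd_lt_castAdd, and_false, false_and, if_false, sum_const_zero, add_zero,
    zero_add]

lemma avoids132_skewSum {m n : ℕ} (σ : Equiv.Perm (Fin m)) (τ : Equiv.Perm (Fin n)) :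
    avoids132 (skewSum σ τ) ↔ avoids132 σ ∧ avoids132 τ := by
  simp only [avoids132, Fin.forall_fin_add, skewSum_castAdd, skewSum_natAdd, Fin.cast_lt_cast,
    Fin.castAdd_lt_castAdd_iff, Fin.natAdd_lt_natAdd_iff, Fin.castAdd_lt_natAdd,
    Fin.not_natAdd_lt_castAdd]
  simp

lemma avoids132_directSum_one {m k : ℕ} (σ : Equiv.Perm (Fin m)) :
    avoids132 (directSum σ (1 : Equiv.Perm (Fin k))) ↔ avoids132 σ := by
  simp only [avoids132, Fin.forall_fin_add, directSum_castAdd, directSum_natAdd,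
    Fin.castAdd_lt_castAdd_iff, Fin.natAdd_lt_natAdd_iff, Fin.castAdd_lt_natAdd,
    Fin.not_natAdd_lt_castAdd, one_apply]
  simp +contextual [le_of_lt]

lemma le_apply_castAdd_of_avoids132 {m r : ℕ} {π : Equiv.Perm (Fin (m + 1 + r))}
    (hπ : avoids132 π) (hmax : ∀ x, π x ≤ π (Fin.castAdd r (Fin.natAdd m 0))) (i : Fin (m + 1)) :
    r ≤ (π (Fin.castAdd r i) : ℕ) := by
  set p := Fin.castAdd r (Fin.natAdd m (0 : Fin 1))
  have lt_max : ∀ x, x ≠ p → π x < π p := fun x hx => (hmax x).lt_of_ne (π.injective.ne hx)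
  refine Fin.le_of_forall_lt_of_injective (π.injective.comp (Fin.natAdd_injective r (m + 1)))
    fun j => ?_
  induction i using Fin.addCases with
  | left i =>
    by_contra! hle
    exact hπ _ p _ (Fin.castAdd_lt_castAdd_iff.2 (Fin.castAdd_lt_natAdd i 0))
      (Fin.castAdd_lt_natAdd _ j)
      ⟨hle.lt_of_ne (π.injective.ne (Fin.castAdd_lt_natAdd _ j).ne),
        lt_max _ (Fin.castAdd_lt_natAdd _ j).ne'⟩
  | right k =>
    rw [Fin.fin_one_eq_zero k]
    exact lt_max _ (Fin.castAdd_lt_natAdd _ j).ne'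

lemma filter_AV132_max_at_eq_image (m r : ℕ) :
    (AV132 (m + 1 + r)).filter (fun π => (π (Fin.castAdd r (Fin.natAdd m 0)) : ℕ) = m + r) =
      (AV132 m ×ˢ AV132 r).image fun p => skewSum (directSum p.1 1) p.2 := by
  ext π
  simp only [AV132, mem_filter, mem_univ, true_and, mem_image, mem_product, Prod.exists]
  constructor
  · rintro ⟨hπ, hmax⟩
    have hmax' : ∀ x, π x ≤ π (Fin.castAdd r (Fin.natAdd m 0)) := fun x =>
      Fin.le_def.2 (by have := (π x).isLt; omega)
    obtain ⟨ρ, τ, rfl⟩ := exists_skewSum_eq π (le_apply_castAdd_of_avoids132 hπ hmax')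
    obtain ⟨hρ, hτ⟩ := (avoids132_skewSum ρ τ).1 hπ
    obtain ⟨σ, ι, rfl⟩ := exists_directSum_eq ρ fun i => by
      have hne := ρ.injective.ne (Fin.castAdd_lt_natAdd i (0 : Fin 1)).ne
      have hlt := (ρ (Fin.castAdd 1 i)).isLt
      simp only [skewSum_castAdd, Fin.val_cast, Fin.val_natAdd] at hmax
      rw [Ne, Fin.ext_iff] at hne
      omega
    rw [Subsingleton.elim ι 1] at hρ ⊢
    exact ⟨σ, τ, ⟨(avoids132_directSum_one σ).1 hρ, hτ⟩, rfl⟩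
  · rintro ⟨σ, τ, ⟨hσ, hτ⟩, rfl⟩
    exact ⟨(avoids132_skewSum _ _).2 ⟨(avoids132_directSum_one σ).2 hσ, hτ⟩, by simp⟩

lemma sum_filter_AV132_max_at (m r : ℕ) :
    ∑ π ∈ (AV132 (m + 1 + r)).filter
        (fun π => (π (Fin.castAdd r (Fin.natAdd m 0)) : ℕ) = m + r), (X : ℤ[X]) ^ a12 π =
      X ^ m * P12 m * P12 r := by
  have hinj : Set.InjOn (fun p : Equiv.Perm (Fin m) × Equiv.Perm (Fin r) =>
      skewSum (directSum p.1 (1 : Equiv.Perm (Fin 1))) p.2) ↑(AV132 m ×ˢ AV132 r) :=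
    fun p _ q _ h => by
      obtain ⟨h1, h2⟩ := skewSum_injective2 h
      exact Prod.ext (directSum_injective2 h1).1 h2
  have a12_one : a12 (1 : Equiv.Perm (Fin 1)) = 0 := by decide
  rw [filter_AV132_max_at_eq_image, sum_image hinj, sum_product, P12, P12, mul_assoc,
    sum_mul_sum, mul_sum]
  refine sum_congr rfl fun σ _ => ?_
  rw [mul_sum]
  refine sum_congr rfl fun τ _ => ?_
  rw [a12_skewSum, a12_directSum, a12_one]
  ring

lemma P12_zero : P12 0 = 1 := by
  rw [P12, show AV132 0 = {1} by decide]
  simp [a12]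

/-- `P_n(t) = ∑_{k=1}^n t^{k-1} P_{k-1}(t) P_{n-k}(t)`, `P_0 = 1`. -/
theorem P12_recurrence :
    P12 0 = 1 ∧
    ∀ n : ℕ, 1 ≤ n →
      P12 n = ∑ k ∈ Finset.Icc 1 n,
        (Polynomial.X : Polynomial ℤ) ^ (k - 1) * P12 (k - 1) * P12 (n - k) := by
  refine ⟨P12_zero, fun n hn => ?_⟩
  have hmaps : ∀ π ∈ AV132 n, ((π⁻¹ ⟨n - 1, by omega⟩ : Fin n) : ℕ) + 1 ∈ Icc 1 n :=
    fun π _ => mem_Icc.2 ⟨by omega, (π⁻¹ _).isLt⟩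
  rw [P12, ← sum_fiberwise_of_maps_to hmaps]
  refine sum_congr rfl fun k hk => ?_
  obtain ⟨m, r, rfl, rfl⟩ : ∃ m r, k = m + 1 ∧ n = m + 1 + r := ⟨k - 1, n - k, by grind⟩
  rw [Nat.add_sub_cancel, Nat.add_sub_cancel_left, ← sum_filter_AV132_max_at]
  refine sum_congr (filter_congr fun π _ => ?_) fun _ _ => rfl
  have hpos := π.val_inv_apply_eq_iff ⟨m + 1 + r - 1, by omega⟩ (Fin.castAdd r (Fin.natAdd m 0))
  simp only [Fin.val_castAdd, Fin.val_natAdd, Fin.val_zero, add_zero] at hpos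
  rw [add_left_inj, hpos]
  omega
end

section
/- For a 132-avoiding permutation π = π₁ n π₂ of {1,…,n} with the maximum n at position k, the number of occurrences of the pattern 231 satisfies a₂₃₁(π) = a₂₃₁(π₁) + a₂₃₁(π₂) + a₁₂(π₁)·(n-k) + (k-1)(n-k). -/
open Finset

/-- inversions entirely inside the prefix strictly before position `k`. -/
def a21Pre {n : ℕ} (π : Equiv.Perm (Fin n)) (k : Fin n) : ℕ :=
  (univ.filter (fun p : Fin n × Fin n =>
    p.1 < p.2 ∧ p.2 < k ∧ π p.2 < π p.1)).card

/-- inversions entirely inside the suffix strictly after position `k`. -/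
def a21Suf {n : ℕ} (π : Equiv.Perm (Fin n)) (k : Fin n) : ℕ :=
  (univ.filter (fun p : Fin n × Fin n =>
    k < p.1 ∧ p.1 < p.2 ∧ π p.2 < π p.1)).card

/-- non-inversions entirely inside the prefix strictly before position `k`. -/
def a12Pre {n : ℕ} (π : Equiv.Perm (Fin n)) (k : Fin n) : ℕ :=
  (univ.filter (fun p : Fin n × Fin n =>
    p.1 < p.2 ∧ p.2 < k ∧ π p.1 < π p.2)).card

/-- non-inversions entirely inside the suffix strictly after position `k`. -/
def a12Suf {n : ℕ} (π : Equiv.Perm (Fin n)) (k : Fin n) : ℕ :=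
  (univ.filter (fun p : Fin n × Fin n =>
    k < p.1 ∧ p.1 < p.2 ∧ π p.1 < π p.2)).card

/-- 231-occurrences entirely inside the prefix strictly before position `k`. -/
def a231Pre {n : ℕ} (π : Equiv.Perm (Fin n)) (k : Fin n) : ℕ :=
  (univ.filter (fun p : Fin n × Fin n × Fin n =>
    p.1 < p.2.1 ∧ p.2.1 < p.2.2 ∧ p.2.2 < k ∧
    π p.2.2 < π p.1 ∧ π p.1 < π p.2.1)).card

/-- 231-occurrences entirely inside the suffix strictly after position `k`. -/
def a231Suf {n : ℕ} (π : Equiv.Perm (Fin n)) (k : Fin n) : ℕ :=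
  (univ.filter (fun p : Fin n × Fin n × Fin n =>
    k < p.1 ∧ p.1 < p.2.1 ∧ p.2.1 < p.2.2 ∧
    π p.2.2 < π p.1 ∧ π p.1 < π p.2.1)).card

/-- 321-occurrences entirely inside the prefix strictly before position `k`. -/
def a321Pre {n : ℕ} (π : Equiv.Perm (Fin n)) (k : Fin n) : ℕ :=
  (univ.filter (fun p : Fin n × Fin n × Fin n =>
    p.1 < p.2.1 ∧ p.2.1 < p.2.2 ∧ p.2.2 < k ∧
    π p.2.2 < π p.2.1 ∧ π p.2.1 < π p.1)).card

/-- 321-occurrences entirely inside the suffix strictly after position `k`. -/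
def a321Suf {n : ℕ} (π : Equiv.Perm (Fin n)) (k : Fin n) : ℕ :=
  (univ.filter (fun p : Fin n × Fin n × Fin n =>
    k < p.1 ∧ p.1 < p.2.1 ∧ p.2.1 < p.2.2 ∧
    π p.2.2 < π p.2.1 ∧ π p.2.1 < π p.1)).card

/-- 4321-occurrences entirely inside the prefix strictly before position `k`. -/
def a4321Pre {n : ℕ} (π : Equiv.Perm (Fin n)) (k : Fin n) : ℕ :=
  (univ.filter (fun p : Fin n × Fin n × Fin n × Fin n =>
    p.1 < p.2.1 ∧ p.2.1 < p.2.2.1 ∧ p.2.2.1 < p.2.2.2 ∧ p.2.2.2 < k ∧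
    π p.2.2.2 < π p.2.2.1 ∧ π p.2.2.1 < π p.2.1 ∧ π p.2.1 < π p.1)).card

/-- 4321-occurrences entirely inside the suffix strictly after position `k`. -/
def a4321Suf {n : ℕ} (π : Equiv.Perm (Fin n)) (k : Fin n) : ℕ :=
  (univ.filter (fun p : Fin n × Fin n × Fin n × Fin n =>
    k < p.1 ∧ p.1 < p.2.1 ∧ p.2.1 < p.2.2.1 ∧ p.2.2.1 < p.2.2.2 ∧
    π p.2.2.2 < π p.2.2.1 ∧ π p.2.2.1 < π p.2.1 ∧ π p.2.1 < π p.1)).card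

/-!
With `n` at position `k`, avoiding 132 forces every entry before `n` to exceed every entry
after it. So an occurrence of 231 lies inside `π₁`, lies inside `π₂`, uses `n` as its `3`
together with any entry of `π₁` and any entry of `π₂`, or takes a non-inversion of `π₁` as
its `23` together with any entry of `π₂` as its `1`.
-/

theorem avoids132.apply_lt_of_apply_lt {n : ℕ} {π : Equiv.Perm (Fin n)} (hav : avoids132 π)
    {i j l : Fin n} (hij : i < j) (hjl : j < l) (h : π l < π j) : π l < π i :=
  (not_lt.1 fun hil => hav i j l hij hjl ⟨hil, h⟩).lt_of_ne (π.injective.ne (hij.trans hjl).ne')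

theorem card_filter_and_lt_snd_snd {n : ℕ} (P : Fin n × Fin n → Prop) [DecidablePred P]
    (k : Fin n) :
    #{p : Fin n × Fin n × Fin n | P (p.1, p.2.1) ∧ k < p.2.2} = #{q | P q} * (n - (k + 1)) := by
  calc _ = #(({q | P q} : Finset _) ×ˢ Ioi k) := card_equiv (Equiv.prodAssoc _ _ _).symm (by simp)
    _ = _ := by rw [card_product, Fin.card_Ioi, Nat.sub_sub, add_comm]

theorem card_filter_fst_lt_snd_eq {n : ℕ} (k : Fin n) :
    #{q : Fin n × Fin n | q.1 < k ∧ q.2 = k} = k := by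
  calc _ = #(Iio k ×ˢ {k}) := by congr 1; ext ⟨a, b⟩; simp [eq_comm]
    _ = k := by simp

theorem a231_eq_of_avoids132 {n : ℕ} {π : Equiv.Perm (Fin n)} (hav : avoids132 π) {k : Fin n}
    (hmax : ∀ m, π m ≤ π k) :
    a231 π = a231Pre π k + a231Suf π k
      + #{p : Fin n × Fin n × Fin n | (p.1 < p.2.1 ∧ p.2.1 < k ∧ π p.1 < π p.2.1) ∧ k < p.2.2}
      + #{p : Fin n × Fin n × Fin n | (p.1 < k ∧ p.2.1 = k) ∧ k < p.2.2} := by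
  have hlt : ∀ {m}, m ≠ k → π m < π k := fun hm => (hmax _).lt_of_ne (π.injective.ne hm)
  rw [a231, a231Pre, a231Suf, ← card_union_of_disjoint, ← card_union_of_disjoint,
    ← card_union_of_disjoint, ← filter_or, ← filter_or, ← filter_or]
  · congr 1
    refine filter_congr fun ⟨i, j, l⟩ _ => ?_
    constructor
    · rintro ⟨hij, hjl, hπli, hπij⟩
      rcases lt_trichotomy l k with hlk | rfl | hkl
      · exact .inl (.inl (.inl ⟨hij, hjl, hlk, hπli, hπij⟩))
      · exact absurd (hmax i) hπli.not_ge
      rcases lt_trichotomy j k with hjk | rfl | hkj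
      · exact .inl (.inr ⟨⟨hij, hjk, hπij⟩, hkl⟩)
      · exact .inr ⟨⟨hij, rfl⟩, hkl⟩
      rcases lt_trichotomy i k with hik | rfl | hki
      · exact absurd (hav.apply_lt_of_apply_lt hik hkj (hlt hkj.ne')) hπij.not_gt
      · exact absurd (hmax j) hπij.not_ge
      · exact .inl (.inl (.inr ⟨hki, hij, hjl, hπli, hπij⟩))
    · rintro (((⟨hij, hjl, -, hπli, hπij⟩ | ⟨-, hij, hjl, hπli, hπij⟩) | ⟨⟨hij, hjk, hπij⟩, hkl⟩) |
        ⟨⟨hik, rfl⟩, hkl⟩)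
      · exact ⟨hij, hjl, hπli, hπij⟩
      · exact ⟨hij, hjl, hπli, hπij⟩
      · exact ⟨hij, hjk.trans hkl,
          hav.apply_lt_of_apply_lt (hij.trans hjk) hkl (hlt hkl.ne'), hπij⟩
      · exact ⟨hik, hkl, hav.apply_lt_of_apply_lt hik hkl (hlt hkl.ne'), hlt hik.ne⟩
  all_goals
    refine disjoint_left.2 fun p hp hq => ?_
    simp only [mem_union, mem_filter, mem_univ, true_and] at hp hq
    omega

/-- Here `k` is 0-based: the paper's `k` is `k.val + 1`. -/
theorem a231_decomposition {n : ℕ} (π : Equiv.Perm (Fin n))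
    (hav : avoids132 π) (k : Fin n) (hmax : ∀ m : Fin n, π m ≤ π k) :
    a231 π = a231Pre π k + a231Suf π k
      + a12Pre π k * (n - (k.val + 1)) + k.val * (n - (k.val + 1)) := by
  rw [a231_eq_of_avoids132 hav hmax,
    card_filter_and_lt_snd_snd (fun q => q.1 < q.2 ∧ q.2 < k ∧ π q.1 < π q.2),
    card_filter_and_lt_snd_snd (fun q => q.1 < k ∧ q.2 = k), card_filter_fst_lt_snd_eq]
  rfl
end

section
/- For a 132-avoiding permutation π = π₁ n π₂ of {1,…,n} with the maximum at position k, a₁₂(π) = a₁₂(π₁) + a₁₂(π₂) + (k-1). -/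
open Finset

/-- For a 132-avoiding permutation with maximum at 0-based position `k`
(1-based `k+1`): `a12(π) = a12(π₁) + a12(π₂) + (k-1)` with 1-based `k`. -/
theorem a12_decomposition {n : ℕ} (π : Equiv.Perm (Fin n))
    (hav : avoids132 π) (k : Fin n) (hmax : ∀ m : Fin n, π m ≤ π k) :
    a12 π = a12Pre π k + a12Suf π k + k.val := by
  classical
  have hlt : ∀ m : Fin n, m ≠ k → π m < π k := fun m hm =>
    lt_of_le_of_ne (hmax m) (fun h => hm (π.injective h))
  unfold a12 a12Pre a12Suf
  have hset : (univ.filter (fun p : Fin n × Fin n => p.1 < p.2 ∧ π p.1 < π p.2))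
      = (univ.filter (fun p : Fin n × Fin n => p.1 < p.2 ∧ p.2 < k ∧ π p.1 < π p.2))
        ∪ (univ.filter (fun p : Fin n × Fin n => k < p.1 ∧ p.1 < p.2 ∧ π p.1 < π p.2))
        ∪ (univ.filter (fun p : Fin n × Fin n => p.1 < k ∧ p.2 = k)) := by
    ext p
    simp only [Finset.mem_filter, Finset.mem_union, Finset.mem_univ, true_and]
    constructor
    · rintro ⟨h1, h2⟩
      rcases lt_trichotomy p.2 k with h | h | h
      · exact Or.inl (Or.inl ⟨h1, h, h2⟩)
      · exact Or.inr ⟨h ▸ h1, h⟩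
      · rcases lt_trichotomy p.1 k with h' | h' | h'
        · exact absurd ⟨h2, hlt p.2 (ne_of_gt h)⟩ (hav p.1 k p.2 h' h)
        · exact absurd h2 (not_lt_of_ge (h' ▸ hmax p.2))
        · exact Or.inl (Or.inr ⟨h', h1, h2⟩)
    · rintro ((⟨h1, _, h2⟩ | ⟨_, h1, h2⟩) | ⟨h1, h2⟩)
      · exact ⟨h1, h2⟩
      · exact ⟨h1, h2⟩
      · obtain ⟨a, b⟩ := p
        simp only at h1 h2 ⊢
        subst h2
        exact ⟨h1, hlt a (ne_of_lt h1)⟩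
  have hd1 : Disjoint
      (univ.filter (fun p : Fin n × Fin n => p.1 < p.2 ∧ p.2 < k ∧ π p.1 < π p.2))
      (univ.filter (fun p : Fin n × Fin n => k < p.1 ∧ p.1 < p.2 ∧ π p.1 < π p.2)) := by
    rw [Finset.disjoint_left]
    rintro p hp hq
    simp only [Finset.mem_filter, Finset.mem_univ, true_and] at hp hq
    exact absurd hp.2.1 (not_lt_of_gt (hq.1.trans hq.2.1))
  have hd2 : Disjoint
      ((univ.filter (fun p : Fin n × Fin n => p.1 < p.2 ∧ p.2 < k ∧ π p.1 < π p.2))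
        ∪ (univ.filter (fun p : Fin n × Fin n => k < p.1 ∧ p.1 < p.2 ∧ π p.1 < π p.2)))
      (univ.filter (fun p : Fin n × Fin n => p.1 < k ∧ p.2 = k)) := by
    rw [Finset.disjoint_left]
    rintro p hp hq
    simp only [Finset.mem_filter, Finset.mem_union, Finset.mem_univ, true_and] at hp hq
    rcases hp with ⟨_, h2, _⟩ | ⟨h1, h2, _⟩
    · exact absurd hq.2 (ne_of_lt h2)
    · exact absurd (hq.2 ▸ (h1.trans h2)) (lt_irrefl k)
  rw [hset, Finset.card_union_of_disjoint hd2, Finset.card_union_of_disjoint hd1]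
  congr 1
  have himg : (univ.filter (fun p : Fin n × Fin n => p.1 < k ∧ p.2 = k))
      = (Finset.Iio k).image (fun i => (i, k)) := by
    ext p
    simp only [Finset.mem_filter, Finset.mem_image, Finset.mem_Iio, Finset.mem_univ, true_and]
    constructor
    · rintro ⟨h1, h2⟩; exact ⟨p.1, h1, by rw [← h2]⟩
    · rintro ⟨i, hi, rfl⟩; exact ⟨hi, rfl⟩
  rw [himg, Finset.card_image_of_injective _
    (fun a b h => by simpa using congrArg Prod.fst h), Fin.card_Iio]
end

section
/- For a 132-avoiding permutation π = π₁ n π₂ of {1,…,n} with maximum at position k, a₄₃₂₁(π) = a₄₃₂₁(π₁) + a₄₃₂₁(π₂) + k·a₃₂₁(π₂) + a₂₁(π₁)·a₂₁(π₂) + (n-k)·a₃₂₁(π₁). -/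
open Finset

/-! The maximum `π k` splits every occurrence of `4321` according to how many of its four
entries lie weakly left of `k`. Since `π` avoids `132`, every entry left of `k` exceeds every
entry right of `k`, so an occurrence with `r` entries on the left is exactly a decreasing
pattern of length `r` in `π₁ n` glued to one of length `4 - r` in `π₂`. The maximum itself can
only be the first entry, so for `r = 1` there are `k + 1` choices on the left, for `r = 3` the
single entry on the right is free among the `n - k - 1` positions, and for `r = 2` the two
inversions are independent. -/

def occ4321 {n : ℕ} (π : Equiv.Perm (Fin n)) : Finset (Fin n × Fin n × Fin n × Fin n) :=
  univ.filter fun p => p.1 < p.2.1 ∧ p.2.1 < p.2.2.1 ∧ p.2.2.1 < p.2.2.2 ∧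
    π p.2.2.2 < π p.2.2.1 ∧ π p.2.2.1 < π p.2.1 ∧ π p.2.1 < π p.1

section

variable {n : ℕ} {π : Equiv.Perm (Fin n)} {k : Fin n}

lemma apply_lt_apply_max_of_ne (hmax : ∀ m, π m ≤ π k) {m : Fin n} (hm : m ≠ k) : π m < π k :=
  (hmax m).lt_of_ne (π.injective.ne hm)

lemma ne_max_of_apply_lt (hmax : ∀ m, π m ≤ π k) {a b : Fin n} (h : π a < π b) : a ≠ k := by
  rintro rfl
  exact (hmax b).not_gt h

lemma avoids132.apply_lt_apply_of_le_max_lt (hav : avoids132 π) (hmax : ∀ m, π m ≤ π k)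
    {i j : Fin n} (hi : i ≤ k) (hj : k < j) : π j < π i := by
  obtain hik | rfl := hi.lt_or_eq
  · exact (π.injective.ne (hik.trans hj).ne').lt_of_le
      (not_lt.1 fun hij => hav i k j hik hj ⟨hij, apply_lt_apply_max_of_ne hmax hj.ne'⟩)
  · exact apply_lt_apply_max_of_ne hmax hj.ne'

@[simp]
lemma mem_occ4321 {p : Fin n × Fin n × Fin n × Fin n} :
    p ∈ occ4321 π ↔ p.1 < p.2.1 ∧ p.2.1 < p.2.2.1 ∧ p.2.2.1 < p.2.2.2 ∧
      π p.2.2.2 < π p.2.2.1 ∧ π p.2.2.1 < π p.2.1 ∧ π p.2.1 < π p.1 := by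
  simp [occ4321]

lemma a4321_eq_card_occ4321 : a4321 π = #(occ4321 π) := rfl

lemma card_filter_le_eq_add {α β : Type*} [LinearOrder β] {s : Finset α} (f g : α → β)
    (hfg : ∀ p ∈ s, f p < g p) (k : β) :
    #(s.filter fun p => f p ≤ k) =
      #(s.filter fun p => f p ≤ k ∧ k < g p) + #(s.filter fun p => g p ≤ k) := by
  rw [← card_filter_add_card_filter_not (s := s.filter fun p => f p ≤ k) (fun p => k < g p),
    filter_filter, filter_filter]
  congr 2
  refine filter_congr fun p hp => ?_
  have := hfg p hp
  constructor
  · exact fun h => not_lt.1 h.2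
  · exact fun h => ⟨this.le.trans h, not_lt.2 h⟩

lemma card_occ4321_eq_sum_cuts (k : Fin n) :
    #(occ4321 π) = #((occ4321 π).filter fun p => k < p.1)
      + #((occ4321 π).filter fun p => p.1 ≤ k ∧ k < p.2.1)
      + #((occ4321 π).filter fun p => p.2.1 ≤ k ∧ k < p.2.2.1)
      + #((occ4321 π).filter fun p => p.2.2.1 ≤ k ∧ k < p.2.2.2)
      + #((occ4321 π).filter fun p => p.2.2.2 ≤ k) := by
  have h := card_filter_add_card_filter_not (s := occ4321 π) (fun p => k < p.1)
  simp only [not_lt] at h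
  rw [← h, card_filter_le_eq_add _ _ (fun p hp => (mem_occ4321.1 hp).1),
    card_filter_le_eq_add _ _ (fun p hp => (mem_occ4321.1 hp).2.1),
    card_filter_le_eq_add _ _ (fun p hp => (mem_occ4321.1 hp).2.2.1)]
  ring

lemma card_occ4321_cut_zero :
    #((occ4321 π).filter fun p => k < p.1) = a4321Suf π k := by
  rw [a4321Suf]
  congr 1
  ext ⟨i, j, l, m⟩
  simp only [mem_filter, mem_occ4321, mem_univ, true_and]
  tauto

lemma card_occ4321_cut_one (hav : avoids132 π) (hmax : ∀ m, π m ≤ π k) :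
    #((occ4321 π).filter fun p => p.1 ≤ k ∧ k < p.2.1) = (k.val + 1) * a321Suf π k := by
  rw [a321Suf, ← Fin.card_Iic, ← card_product]
  congr 1
  ext ⟨i, j, l, m⟩
  simp only [mem_filter, mem_occ4321, mem_univ, true_and, mem_product, mem_Iic]
  constructor
  · rintro ⟨⟨-, hjl, hlm, hml, hlj, -⟩, hi, hj⟩
    exact ⟨hi, hj, hjl, hlm, hml, hlj⟩
  · rintro ⟨hi, hj, hjl, hlm, hml, hlj⟩
    exact ⟨⟨hi.trans_lt hj, hjl, hlm, hml, hlj, hav.apply_lt_apply_of_le_max_lt hmax hi hj⟩, hi, hj⟩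

lemma card_occ4321_cut_two (hav : avoids132 π) (hmax : ∀ m, π m ≤ π k) :
    #((occ4321 π).filter fun p => p.2.1 ≤ k ∧ k < p.2.2.1) = a21Pre π k * a21Suf π k := by
  rw [a21Pre, a21Suf, ← card_product]
  refine card_equiv (Equiv.prodAssoc _ _ _).symm fun ⟨i, j, l, m⟩ => ?_
  simp only [mem_filter, mem_occ4321, mem_univ, true_and, mem_product, Equiv.prodAssoc_symm_apply]
  constructor
  · rintro ⟨⟨hij, -, hlm, hml, -, hji⟩, hj, hl⟩
    exact ⟨⟨hij, hj.lt_of_ne (ne_max_of_apply_lt hmax hji), hji⟩, hl, hlm, hml⟩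
  · rintro ⟨⟨hij, hj, hji⟩, hl, hlm, hml⟩
    exact ⟨⟨hij, hj.trans hl, hlm, hml, hav.apply_lt_apply_of_le_max_lt hmax hj.le hl, hji⟩,
      hj.le, hl⟩

lemma card_occ4321_cut_three (hav : avoids132 π) (hmax : ∀ m, π m ≤ π k) :
    #((occ4321 π).filter fun p => p.2.2.1 ≤ k ∧ k < p.2.2.2) =
      (n - (k.val + 1)) * a321Pre π k := by
  rw [show n - (k.val + 1) = #(Ioi k) by rw [Fin.card_Ioi]; omega, mul_comm, a321Pre,
    ← card_product]
  refine card_equiv ((Equiv.prodCongr (Equiv.refl _) (Equiv.prodAssoc _ _ _).symm).trans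
    (Equiv.prodAssoc _ _ _).symm) fun ⟨i, j, l, m⟩ => ?_
  simp only [mem_filter, mem_occ4321, mem_univ, true_and, mem_product, mem_Ioi, Equiv.trans_apply,
    Equiv.prodCongr_apply, Equiv.prodAssoc_symm_apply, Equiv.coe_refl, Prod.map]
  constructor
  · rintro ⟨⟨hij, hjl, -, -, hlj, hji⟩, hl, hm⟩
    exact ⟨⟨hij, hjl, hl.lt_of_ne (ne_max_of_apply_lt hmax (hlj.trans hji)), hlj, hji⟩, hm⟩
  · rintro ⟨⟨hij, hjl, hl, hlj, hji⟩, hm⟩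
    exact ⟨⟨hij, hjl, hl.trans hm, hav.apply_lt_apply_of_le_max_lt hmax hl.le hm, hlj, hji⟩,
      hl.le, hm⟩

lemma card_occ4321_cut_four (hmax : ∀ m, π m ≤ π k) :
    #((occ4321 π).filter fun p => p.2.2.2 ≤ k) = a4321Pre π k := by
  rw [a4321Pre]
  congr 1
  ext ⟨i, j, l, m⟩
  simp only [mem_filter, mem_occ4321, mem_univ, true_and]
  constructor
  · rintro ⟨⟨hij, hjl, hlm, hml, hlj, hji⟩, hm⟩
    exact ⟨hij, hjl, hlm,
      hm.lt_of_ne (ne_max_of_apply_lt hmax (hml.trans (hlj.trans hji))), hml, hlj, hji⟩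
  · rintro ⟨hij, hjl, hlm, hm, hml, hlj, hji⟩
    exact ⟨⟨hij, hjl, hlm, hml, hlj, hji⟩, hm.le⟩

end

/-- `k` is the 0-based position of the maximum, so the paper's `k` is `k.val + 1`. -/
theorem a4321_decomposition {n : ℕ} (π : Equiv.Perm (Fin n))
    (hav : avoids132 π) (k : Fin n) (hmax : ∀ m : Fin n, π m ≤ π k) :
    a4321 π = a4321Pre π k + a4321Suf π k
      + (k.val + 1) * a321Suf π k
      + a21Pre π k * a21Suf π k
      + (n - (k.val + 1)) * a321Pre π k := by
  rw [a4321_eq_card_occ4321, card_occ4321_eq_sum_cuts k, card_occ4321_cut_zero,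
    card_occ4321_cut_one hav hmax, card_occ4321_cut_two hav hmax,
    card_occ4321_cut_three hav hmax, card_occ4321_cut_four hmax]
  ring
end

section
/- The bivariate polynomials Q_n(t,q) = ∑_{π ∈ AV₁₃₂(n)} t^{a₂₃₁(π)} q^{a₁₂(π)} satisfy the functional recurrence Q_n(t,q) = ∑_{k=1}^{n} t^{(k-1)(n-k)} q^{k-1} Q_{k-1}(t, t^{n-k} q) Q_{n-k}(t, q), with Q_0(t,q) = 1. -/
open Finset

/-- `Q_n(t,q) = ∑_(π ∈ AV₁₃₂(n)) t^(a_(231) π) q^(a_(12) π)`,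
as a function of `t, q`. -/
def Q231 (n : ℕ) (t q : ℤ) : ℤ :=
  ∑ π ∈ AV132 n, t ^ a231 π * q ^ a12 π

namespace QRec
variable {m r : ℕ}

def glueFun (L : Equiv.Perm (Fin m)) (R : Equiv.Perm (Fin r)) : Fin (m+1+r) → Fin (m+1+r) :=
  fun i => if h : i.val < m then ⟨r + L ⟨i.val, h⟩, by have := (L ⟨i.val, h⟩).isLt; omega⟩
    else if h2 : i.val = m then ⟨m + r, by omega⟩
    else ⟨R ⟨i.val - (m+1), by have := i.isLt; omega⟩, by have := (R ⟨i.val - (m+1), by have := i.isLt; omega⟩).isLt; omega⟩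

lemma glueFun_inj (L : Equiv.Perm (Fin m)) (R : Equiv.Perm (Fin r)) :
    Function.Injective (glueFun L R) := by
  intro a b hab
  unfold glueFun at hab
  split_ifs at hab with h1 h2 h3 h4 h5 <;>
    simp only [Fin.mk.injEq] at hab <;>
    try (exfalso; first
      | (have := (L ⟨a.val, by omega⟩).isLt; have := (R ⟨b.val - (m+1), by omega⟩).isLt; omega)
      | (have := (L ⟨b.val, by omega⟩).isLt; have := (R ⟨a.val - (m+1), by omega⟩).isLt; omega)
      | omega)
  · have : L ⟨a.val, h1⟩ = L ⟨b.val, h2⟩ := Fin.ext (by omega)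
    have := L.injective this
    exact Fin.ext (by simpa [Fin.ext_iff] using this)
  · exact Fin.ext (by omega)
  · have : R ⟨a.val - (m+1), by omega⟩ = R ⟨b.val - (m+1), by omega⟩ := Fin.ext (by omega)
    have := R.injective this
    have := Fin.mk.injEq _ _ _ _ ▸ this
    have ha := a.isLt; have hb := b.isLt
    exact Fin.ext (by omega)

noncomputable def glue (L : Equiv.Perm (Fin m)) (R : Equiv.Perm (Fin r)) : Equiv.Perm (Fin (m+1+r)) :=
  Equiv.ofBijective (glueFun L R) (Finite.injective_iff_bijective.mp (glueFun_inj L R))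

lemma glue_val_left (L : Equiv.Perm (Fin m)) (R : Equiv.Perm (Fin r)) (i : Fin (m+1+r)) (h : i.val < m) :
    (glue L R i).val = r + (L ⟨i.val, h⟩).val := by
  simp [glue, Equiv.ofBijective, glueFun, h]

lemma glue_val_mid (L : Equiv.Perm (Fin m)) (R : Equiv.Perm (Fin r)) (i : Fin (m+1+r)) (h : i.val = m) :
    (glue L R i).val = m + r := by
  simp [glue, Equiv.ofBijective, glueFun, h]

lemma glue_val_right (L : Equiv.Perm (Fin m)) (R : Equiv.Perm (Fin r)) (i : Fin (m+1+r)) (h : m < i.val) :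
    (glue L R i).val = (R ⟨i.val - (m+1), by have := i.isLt; omega⟩).val := by
  have h1 : ¬ i.val < m := by omega
  have h2 : ¬ i.val = m := by omega
  simp [glue, Equiv.ofBijective, glueFun, h1, h2]

end QRec
namespace QRec
variable {m r : ℕ}

lemma glue_avoids {L : Equiv.Perm (Fin m)} {R : Equiv.Perm (Fin r)}
    (hL : avoids132 L) (hR : avoids132 R) : avoids132 (glue L R) := by
  intro i j l hij hjl hpat
  obtain ⟨h1, h2⟩ := hpat
  rw [Fin.lt_def] at hij hjl h1 h2
  rcases Nat.lt_trichotomy i.val m with hi | hi | hi <;>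
  rcases Nat.lt_trichotomy j.val m with hj | hj | hj <;>
  rcases Nat.lt_trichotomy l.val m with hl | hl | hl <;>
  try omega
  · -- LLL
    rw [glue_val_left L R i hi, glue_val_left L R l hl] at h1
    rw [glue_val_left L R l hl, glue_val_left L R j hj] at h2
    exact hL ⟨i.val, hi⟩ ⟨j.val, hj⟩ ⟨l.val, hl⟩ (Fin.mk_lt_mk.mpr hij) (Fin.mk_lt_mk.mpr hjl)
      ⟨Fin.lt_def.mpr (by omega), Fin.lt_def.mpr (by omega)⟩
  · -- LLM
    rw [glue_val_mid L R l hl, glue_val_left L R j hj] at h2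
    have := (L ⟨j.val, hj⟩).isLt; omega
  · -- LLR
    rw [glue_val_left L R i hi, glue_val_right L R l hl] at h1
    have := (R ⟨l.val - (m+1), by have := l.isLt; omega⟩).isLt; omega
  · -- LMR
    rw [glue_val_left L R i hi, glue_val_right L R l hl] at h1
    have := (R ⟨l.val - (m+1), by have := l.isLt; omega⟩).isLt; omega
  · -- LRR
    rw [glue_val_left L R i hi, glue_val_right L R l hl] at h1
    have := (R ⟨l.val - (m+1), by have := l.isLt; omega⟩).isLt; omega
  · -- MRR
    rw [glue_val_mid L R i hi, glue_val_right L R l hl] at h1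
    have := (R ⟨l.val - (m+1), by have := l.isLt; omega⟩).isLt; omega
  · -- RRR
    rw [glue_val_right L R i hi, glue_val_right L R l hl] at h1
    rw [glue_val_right L R l hl, glue_val_right L R j hj] at h2
    have hlt := l.isLt
    exact hR ⟨i.val - (m+1), by omega⟩ ⟨j.val - (m+1), by omega⟩ ⟨l.val - (m+1), by omega⟩
      (Fin.mk_lt_mk.mpr (by omega)) (Fin.mk_lt_mk.mpr (by omega))
      ⟨Fin.lt_def.mpr (by omega), Fin.lt_def.mpr (by omega)⟩

end QRec
namespace QRec
variable {m r : ℕ} (L : Equiv.Perm (Fin m)) (R : Equiv.Perm (Fin r))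

lemma glue_apply_left (i : Fin m) :
    (glue L R (Fin.castAdd r (Fin.castAdd 1 i))).val = r + (L i).val := by
  rw [glue_val_left L R _ (show (Fin.castAdd r (Fin.castAdd 1 i)).val < m by simp [i.isLt])]
  congr 1

lemma glue_apply_mid (x : Fin 1) :
    (glue L R (Fin.castAdd r (Fin.natAdd m x))).val = m + r := by
  rw [glue_val_mid L R _ (show (Fin.castAdd r (Fin.natAdd m x)).val = m by simp)]

lemma glue_apply_right (j : Fin r) :
    (glue L R (Fin.natAdd (m+1) j)).val = (R j).val := by
  rw [glue_val_right L R _ (show m < (Fin.natAdd (m+1) j).val by simp; omega)]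
  congr 1
  simp

lemma a12_eq_sum {n : ℕ} (π : Equiv.Perm (Fin n)) :
    a12 π = ∑ i : Fin n, ∑ j : Fin n, if (i.val < j.val ∧ (π i).val < (π j).val) then 1 else 0 := by
  rw [a12, Finset.card_filter, Fintype.sum_prod_type]
  simp only [Fin.lt_def]

lemma a12_glue : a12 (glue L R) = a12 L + a12 R + m := by
  rw [a12_eq_sum]
  simp only [Fin.sum_univ_add, Fin.sum_univ_one, Fin.coe_castAdd, Fin.coe_natAdd,
    glue_apply_left, glue_apply_mid, glue_apply_right, Fin.val_zero]
  have hA : ∀ x y : Fin m, (if (x:ℕ) < (y:ℕ) ∧ r + ((L x):ℕ) < r + ((L y):ℕ) then (1:ℕ) else 0)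
      = (if (x:ℕ) < (y:ℕ) ∧ ((L x):ℕ) < ((L y):ℕ) then 1 else 0) :=
    fun x y => if_congr (by omega) rfl rfl
  have h1b : ∀ x : Fin m, (if (x:ℕ) < m + 0 ∧ r + ((L x):ℕ) < m + r then (1:ℕ) else 0) = 1 :=
    fun x => if_pos ⟨by have := x.isLt; omega, by have := (L x).isLt; omega⟩
  have h1c : ∀ x : Fin m, (∑ y : Fin r, if (x:ℕ) < m + 1 + (y:ℕ) ∧ r + ((L x):ℕ) < ((R y):ℕ) then (1:ℕ) else 0) = 0 :=
    fun x => Finset.sum_eq_zero (fun y _ => if_neg (by have := (R y).isLt; omega))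
  have h2a : (∑ x : Fin m, if m + 0 < (x:ℕ) ∧ m + r < r + ((L x):ℕ) then (1:ℕ) else 0) = 0 :=
    Finset.sum_eq_zero (fun x _ => if_neg (by have := x.isLt; omega))
  have h2c : (∑ x : Fin r, if m + 0 < m + 1 + (x:ℕ) ∧ m + r < ((R x):ℕ) then (1:ℕ) else 0) = 0 :=
    Finset.sum_eq_zero (fun x _ => if_neg (by have := (R x).isLt; omega))
  have h3a : ∀ x : Fin r, (∑ y : Fin m, if m + 1 + (x:ℕ) < (y:ℕ) ∧ ((R x):ℕ) < r + ((L y):ℕ) then (1:ℕ) else 0) = 0 :=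
    fun x => Finset.sum_eq_zero (fun y _ => if_neg (by have := y.isLt; omega))
  have hC : ∀ x y : Fin r, (if m + 1 + (x:ℕ) < m + 1 + (y:ℕ) ∧ ((R x):ℕ) < ((R y):ℕ) then (1:ℕ) else 0)
      = (if (x:ℕ) < (y:ℕ) ∧ ((R x):ℕ) < ((R y):ℕ) then 1 else 0) :=
    fun x y => if_congr (by omega) rfl rfl
  have h3b : ∀ x : Fin r, (if m + 1 + (x:ℕ) < m + 0 ∧ ((R x):ℕ) < m + r then (1:ℕ) else 0) = 0 :=
    fun x => if_neg (by omega)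
  simp only [hA, hC, h1b, h1c, h2a, h2c, h3a, h3b, if_neg (show ¬(m + 0 < m + 0 ∧ m + r < m + r) by omega)]
  rw [a12_eq_sum L, a12_eq_sum R]
  simp only [Finset.sum_add_distrib, Finset.sum_const, smul_eq_mul, mul_one, add_zero, zero_add,
    Finset.sum_const_zero, Finset.card_univ, Fintype.card_fin]
  omega

end QRec
namespace QRec
variable {m r : ℕ} (L : Equiv.Perm (Fin m)) (R : Equiv.Perm (Fin r))

lemma a231_eq_sum {n : ℕ} (π : Equiv.Perm (Fin n)) :
    a231 π = ∑ i : Fin n, ∑ j : Fin n, ∑ l : Fin n,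
      if (i.val < j.val ∧ j.val < l.val ∧ (π l).val < (π i).val ∧ (π i).val < (π j).val) then 1 else 0 := by
  rw [a231, Finset.card_filter, Fintype.sum_prod_type]
  simp only [Fintype.sum_prod_type, Fin.lt_def]

lemma a231_glue : a231 (glue L R) = a231 L + a231 R + m * r + r * a12 L := by
  rw [a231_eq_sum]
  simp only [Fin.sum_univ_add, Fin.sum_univ_one, Fin.coe_castAdd, Fin.coe_natAdd,
    glue_apply_left, glue_apply_mid, glue_apply_right, Fin.val_zero]
  have hLLL : ∀ x y z : Fin m,
      (if (x:ℕ) < (y:ℕ) ∧ (y:ℕ) < (z:ℕ) ∧ r + ((L z):ℕ) < r + ((L x):ℕ) ∧ r + ((L x):ℕ) < r + ((L y):ℕ) then (1:ℕ) else 0)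
      = (if (x:ℕ) < (y:ℕ) ∧ (y:ℕ) < (z:ℕ) ∧ ((L z):ℕ) < ((L x):ℕ) ∧ ((L x):ℕ) < ((L y):ℕ) then 1 else 0) :=
    fun x y z => if_congr (by omega) rfl rfl
  have hLLM : ∀ x y : Fin m,
      (if (x:ℕ) < (y:ℕ) ∧ (y:ℕ) < m + 0 ∧ m + r < r + ((L x):ℕ) ∧ r + ((L x):ℕ) < r + ((L y):ℕ) then (1:ℕ) else 0) = 0 :=
    fun x y => if_neg (by have := (L x).isLt; omega)
  have hLLR : ∀ x y : Fin m,
      (∑ z : Fin r, if (x:ℕ) < (y:ℕ) ∧ (y:ℕ) < m + 1 + (z:ℕ) ∧ ((R z):ℕ) < r + ((L x):ℕ) ∧ r + ((L x):ℕ) < r + ((L y):ℕ) then (1:ℕ) else 0)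
      = r * (if (x:ℕ) < (y:ℕ) ∧ ((L x):ℕ) < ((L y):ℕ) then 1 else 0) := by
    intro x y
    have h : ∀ z : Fin r,
        (if (x:ℕ) < (y:ℕ) ∧ (y:ℕ) < m + 1 + (z:ℕ) ∧ ((R z):ℕ) < r + ((L x):ℕ) ∧ r + ((L x):ℕ) < r + ((L y):ℕ) then (1:ℕ) else 0)
        = (if (x:ℕ) < (y:ℕ) ∧ ((L x):ℕ) < ((L y):ℕ) then 1 else 0) :=
      fun z => if_congr (by have := (R z).isLt; have := y.isLt; omega) rfl rfl
    rw [Finset.sum_congr rfl (fun z _ => h z), Finset.sum_const, Finset.card_univ,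
      Fintype.card_fin, smul_eq_mul]
  have hLML : ∀ x y : Fin m,
      (if (x:ℕ) < m + 0 ∧ m + 0 < (y:ℕ) ∧ r + ((L y):ℕ) < r + ((L x):ℕ) ∧ r + ((L x):ℕ) < m + r then (1:ℕ) else 0) = 0 :=
    fun x y => if_neg (by have := y.isLt; omega)
  have hLMM : ∀ x : Fin m,
      (if (x:ℕ) < m + 0 ∧ m + 0 < m + 0 ∧ m + r < r + ((L x):ℕ) ∧ r + ((L x):ℕ) < m + r then (1:ℕ) else 0) = 0 :=
    fun x => if_neg (by omega)
  have hLMR : ∀ x : Fin m,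
      (∑ y : Fin r, if (x:ℕ) < m + 0 ∧ m + 0 < m + 1 + (y:ℕ) ∧ ((R y):ℕ) < r + ((L x):ℕ) ∧ r + ((L x):ℕ) < m + r then (1:ℕ) else 0) = r := by
    intro x
    have h : ∀ y : Fin r,
        (if (x:ℕ) < m + 0 ∧ m + 0 < m + 1 + (y:ℕ) ∧ ((R y):ℕ) < r + ((L x):ℕ) ∧ r + ((L x):ℕ) < m + r then (1:ℕ) else 0) = 1 :=
      fun y => if_pos ⟨by have := x.isLt; omega, by omega, by have := (R y).isLt; omega, by have := (L x).isLt; omega⟩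
    rw [Finset.sum_congr rfl (fun y _ => h y), Finset.sum_const, Finset.card_univ,
      Fintype.card_fin, smul_eq_mul, mul_one]
  have hLRL : ∀ (x : Fin m) (y : Fin r) (z : Fin m),
      (if (x:ℕ) < m + 1 + (y:ℕ) ∧ m + 1 + (y:ℕ) < (z:ℕ) ∧ r + ((L z):ℕ) < r + ((L x):ℕ) ∧ r + ((L x):ℕ) < ((R y):ℕ) then (1:ℕ) else 0) = 0 :=
    fun x y z => if_neg (by have := z.isLt; omega)
  have hLRM : ∀ (x : Fin m) (y : Fin r),
      (if (x:ℕ) < m + 1 + (y:ℕ) ∧ m + 1 + (y:ℕ) < m + 0 ∧ m + r < r + ((L x):ℕ) ∧ r + ((L x):ℕ) < ((R y):ℕ) then (1:ℕ) else 0) = 0 :=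
    fun x y => if_neg (by omega)
  have hLRR : ∀ (x : Fin m) (y z : Fin r),
      (if (x:ℕ) < m + 1 + (y:ℕ) ∧ m + 1 + (y:ℕ) < m + 1 + (z:ℕ) ∧ ((R z):ℕ) < r + ((L x):ℕ) ∧ r + ((L x):ℕ) < ((R y):ℕ) then (1:ℕ) else 0) = 0 :=
    fun x y z => if_neg (by have := (R y).isLt; omega)
  have hMLL : ∀ x y : Fin m,
      (if m + 0 < (x:ℕ) ∧ (x:ℕ) < (y:ℕ) ∧ r + ((L y):ℕ) < m + r ∧ m + r < r + ((L x):ℕ) then (1:ℕ) else 0) = 0 :=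
    fun x y => if_neg (by have := x.isLt; omega)
  have hMLM : ∀ x : Fin m,
      (if m + 0 < (x:ℕ) ∧ (x:ℕ) < m + 0 ∧ m + r < m + r ∧ m + r < r + ((L x):ℕ) then (1:ℕ) else 0) = 0 :=
    fun x => if_neg (by omega)
  have hMLR : ∀ (x : Fin m) (y : Fin r),
      (if m + 0 < (x:ℕ) ∧ (x:ℕ) < m + 1 + (y:ℕ) ∧ ((R y):ℕ) < m + r ∧ m + r < r + ((L x):ℕ) then (1:ℕ) else 0) = 0 :=
    fun x y => if_neg (by have := x.isLt; omega)
  have hMML : ∀ x : Fin m,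
      (if m + 0 < m + 0 ∧ m + 0 < (x:ℕ) ∧ r + ((L x):ℕ) < m + r ∧ m + r < m + r then (1:ℕ) else 0) = 0 :=
    fun x => if_neg (by omega)
  have hMMM : (if m + 0 < m + 0 ∧ m + 0 < m + 0 ∧ m + r < m + r ∧ m + r < m + r then (1:ℕ) else 0) = 0 :=
    if_neg (by omega)
  have hMMR : ∀ x : Fin r,
      (if m + 0 < m + 0 ∧ m + 0 < m + 1 + (x:ℕ) ∧ ((R x):ℕ) < m + r ∧ m + r < m + r then (1:ℕ) else 0) = 0 :=
    fun x => if_neg (by omega)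
  have hMRL : ∀ (x : Fin r) (y : Fin m),
      (if m + 0 < m + 1 + (x:ℕ) ∧ m + 1 + (x:ℕ) < (y:ℕ) ∧ r + ((L y):ℕ) < m + r ∧ m + r < ((R x):ℕ) then (1:ℕ) else 0) = 0 :=
    fun x y => if_neg (by have := y.isLt; omega)
  have hMRM : ∀ x : Fin r,
      (if m + 0 < m + 1 + (x:ℕ) ∧ m + 1 + (x:ℕ) < m + 0 ∧ m + r < m + r ∧ m + r < ((R x):ℕ) then (1:ℕ) else 0) = 0 :=
    fun x => if_neg (by omega)
  have hMRR : ∀ x y : Fin r,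
      (if m + 0 < m + 1 + (x:ℕ) ∧ m + 1 + (x:ℕ) < m + 1 + (y:ℕ) ∧ ((R y):ℕ) < m + r ∧ m + r < ((R x):ℕ) then (1:ℕ) else 0) = 0 :=
    fun x y => if_neg (by have := (R x).isLt; omega)
  have hRLL : ∀ (x : Fin r) (y z : Fin m),
      (if m + 1 + (x:ℕ) < (y:ℕ) ∧ (y:ℕ) < (z:ℕ) ∧ r + ((L z):ℕ) < ((R x):ℕ) ∧ ((R x):ℕ) < r + ((L y):ℕ) then (1:ℕ) else 0) = 0 :=
    fun x y z => if_neg (by have := y.isLt; omega)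
  have hRLM : ∀ (x : Fin r) (y : Fin m),
      (if m + 1 + (x:ℕ) < (y:ℕ) ∧ (y:ℕ) < m + 0 ∧ m + r < ((R x):ℕ) ∧ ((R x):ℕ) < r + ((L y):ℕ) then (1:ℕ) else 0) = 0 :=
    fun x y => if_neg (by have := y.isLt; omega)
  have hRLR : ∀ (x : Fin r) (y : Fin m) (z : Fin r),
      (if m + 1 + (x:ℕ) < (y:ℕ) ∧ (y:ℕ) < m + 1 + (z:ℕ) ∧ ((R z):ℕ) < ((R x):ℕ) ∧ ((R x):ℕ) < r + ((L y):ℕ) then (1:ℕ) else 0) = 0 :=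
    fun x y z => if_neg (by have := y.isLt; omega)
  have hRML : ∀ (x : Fin r) (y : Fin m),
      (if m + 1 + (x:ℕ) < m + 0 ∧ m + 0 < (y:ℕ) ∧ r + ((L y):ℕ) < ((R x):ℕ) ∧ ((R x):ℕ) < m + r then (1:ℕ) else 0) = 0 :=
    fun x y => if_neg (by omega)
  have hRMM : ∀ x : Fin r,
      (if m + 1 + (x:ℕ) < m + 0 ∧ m + 0 < m + 0 ∧ m + r < ((R x):ℕ) ∧ ((R x):ℕ) < m + r then (1:ℕ) else 0) = 0 :=
    fun x => if_neg (by omega)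
  have hRMR : ∀ x y : Fin r,
      (if m + 1 + (x:ℕ) < m + 0 ∧ m + 0 < m + 1 + (y:ℕ) ∧ ((R y):ℕ) < ((R x):ℕ) ∧ ((R x):ℕ) < m + r then (1:ℕ) else 0) = 0 :=
    fun x y => if_neg (by omega)
  have hRRL : ∀ (x y : Fin r) (z : Fin m),
      (if m + 1 + (x:ℕ) < m + 1 + (y:ℕ) ∧ m + 1 + (y:ℕ) < (z:ℕ) ∧ r + ((L z):ℕ) < ((R x):ℕ) ∧ ((R x):ℕ) < ((R y):ℕ) then (1:ℕ) else 0) = 0 :=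
    fun x y z => if_neg (by have := z.isLt; omega)
  have hRRM : ∀ x y : Fin r,
      (if m + 1 + (x:ℕ) < m + 1 + (y:ℕ) ∧ m + 1 + (y:ℕ) < m + 0 ∧ m + r < ((R x):ℕ) ∧ ((R x):ℕ) < ((R y):ℕ) then (1:ℕ) else 0) = 0 :=
    fun x y => if_neg (by omega)
  have hRRR : ∀ x y z : Fin r,
      (if m + 1 + (x:ℕ) < m + 1 + (y:ℕ) ∧ m + 1 + (y:ℕ) < m + 1 + (z:ℕ) ∧ ((R z):ℕ) < ((R x):ℕ) ∧ ((R x):ℕ) < ((R y):ℕ) then (1:ℕ) else 0)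
      = (if (x:ℕ) < (y:ℕ) ∧ (y:ℕ) < (z:ℕ) ∧ ((R z):ℕ) < ((R x):ℕ) ∧ ((R x):ℕ) < ((R y):ℕ) then 1 else 0) :=
    fun x y z => if_congr (by omega) rfl rfl
  simp only [hLLL, hLLM, hLLR, hLML, hLMM, hLMR, hLRL, hLRM, hLRR, hMLL, hMLM, hMLR, hMML, hMMM,
    hMMR, hMRL, hMRM, hMRR, hRLL, hRLM, hRLR, hRML, hRMM, hRMR, hRRL, hRRM, hRRR]
  rw [a231_eq_sum L, a231_eq_sum R, a12_eq_sum L]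
  simp only [Finset.mul_sum, Finset.sum_add_distrib, Finset.sum_const, smul_eq_mul, mul_one,
    mul_zero, add_zero, zero_add, Finset.sum_const_zero, Finset.card_univ, Fintype.card_fin]
  omega

end QRec
namespace QRec
variable {m r : ℕ}

lemma mem_AV132 {n : ℕ} {π : Equiv.Perm (Fin n)} : π ∈ AV132 n ↔ avoids132 π := by
  simp [AV132]

lemma card_le_filter : ((univ : Finset (Fin (m+1+r))).filter (fun x => x.val ≤ m)).card = m+1 := by
  rw [Finset.card_filter]
  simp only [Fin.sum_univ_add, Fin.sum_univ_one, Fin.coe_castAdd, Fin.coe_natAdd, Fin.val_zero]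
  have h1 : ∀ x : Fin m, (if (x:ℕ) ≤ m then (1:ℕ) else 0) = 1 := fun x => if_pos (by have := x.isLt; omega)
  have h2 : ∀ x : Fin r, (if m + 1 + (x:ℕ) ≤ m then (1:ℕ) else 0) = 0 := fun x => if_neg (by omega)
  simp only [h1, h2, if_pos (show m + 0 ≤ m by omega), Finset.sum_const, Finset.sum_const_zero,
    smul_eq_mul, mul_one, Finset.card_univ, Fintype.card_fin]
  omega

lemma card_gt_filter : ((univ : Finset (Fin (m+1+r))).filter (fun x => m < x.val)).card = r := by
  rw [Finset.card_filter]
  simp only [Fin.sum_univ_add, Fin.sum_univ_one, Fin.coe_castAdd, Fin.coe_natAdd, Fin.val_zero]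
  have h1 : ∀ x : Fin m, (if m < (x:ℕ) then (1:ℕ) else 0) = 0 := fun x => if_neg (by have := x.isLt; omega)
  have h2 : ∀ x : Fin r, (if m < m + 1 + (x:ℕ) then (1:ℕ) else 0) = 1 := fun x => if_pos (by omega)
  simp only [h1, h2, if_neg (show ¬ m < m + 0 by omega), Finset.sum_const, Finset.sum_const_zero,
    smul_eq_mul, mul_one, Finset.card_univ, Fintype.card_fin]
  omega

variable {π : Equiv.Perm (Fin (m+1+r))}

lemma fiber_top (hmid : π ⟨m, by omega⟩ = ⟨m+r, by omega⟩) (x : Fin (m+1+r)) (hx : x.val ≠ m) :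
    (π x).val ≠ m + r := by
  intro h
  have h2 : π x = π ⟨m, by omega⟩ := by rw [hmid]; exact Fin.ext h
  have := π.injective h2
  rw [Fin.ext_iff] at this
  exact hx this

lemma fiber_cross (hav : avoids132 π) (hmid : π ⟨m, by omega⟩ = ⟨m+r, by omega⟩)
    {x y : Fin (m+1+r)} (hx : x.val < m) (hy : m < y.val) : (π y).val < (π x).val := by
  have h2 := hav x ⟨m, by omega⟩ y (Fin.lt_def.mpr hx) (Fin.lt_def.mpr hy)
  rw [hmid] at h2
  have hne : (π x).val ≠ (π y).val := fun h => by
    have := π.injective (Fin.ext h); rw [Fin.ext_iff] at this; omega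
  have hy' := fiber_top hmid y (by omega)
  have hlt := (π y).isLt
  simp only [Fin.lt_def] at h2
  omega

lemma fiber_right (hav : avoids132 π) (hmid : π ⟨m, by omega⟩ = ⟨m+r, by omega⟩)
    {y : Fin (m+1+r)} (hy : m < y.val) : (π y).val < r := by
  have hcard : (((univ : Finset (Fin (m+1+r))).filter (fun x => x.val ≤ m)).image π).card = m + 1 := by
    rw [Finset.card_image_of_injective _ π.injective, card_le_filter]
  have hsub : ((univ : Finset (Fin (m+1+r))).filter (fun x => x.val ≤ m)).image π ⊆ Finset.Ioi (π y) := by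
    intro v hv
    rw [Finset.mem_image] at hv
    obtain ⟨x, hx, rfl⟩ := hv
    rw [Finset.mem_filter] at hx
    rw [Finset.mem_Ioi, Fin.lt_def]
    rcases Nat.lt_or_ge x.val m with h | h
    · exact fiber_cross hav hmid h hy
    · have hxm : x = ⟨m, by omega⟩ := Fin.ext (by show x.val = m; omega)
      rw [hxm, hmid]
      have := fiber_top hmid y (by omega)
      have := (π y).isLt
      show (π y).val < m + r
      omega
  have hle := Finset.card_le_card hsub
  rw [Fin.card_Ioi, hcard] at hle
  omega

lemma fiber_left (hav : avoids132 π) (hmid : π ⟨m, by omega⟩ = ⟨m+r, by omega⟩)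
    {x : Fin (m+1+r)} (hx : x.val < m) : r ≤ (π x).val := by
  have hcard : (((univ : Finset (Fin (m+1+r))).filter (fun y => m < y.val)).image π).card = r := by
    rw [Finset.card_image_of_injective _ π.injective, card_gt_filter]
  have hsub : ((univ : Finset (Fin (m+1+r))).filter (fun y => m < y.val)).image π ⊆ Finset.Iio (π x) := by
    intro v hv
    rw [Finset.mem_image] at hv
    obtain ⟨y, hy, rfl⟩ := hv
    rw [Finset.mem_filter] at hy
    rw [Finset.mem_Iio, Fin.lt_def]
    exact fiber_cross hav hmid hx hy.2
  have hle := Finset.card_le_card hsub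
  rw [Fin.card_Iio, hcard] at hle
  exact hle

end QRec
namespace QRec

lemma fiber_sum (m r : ℕ) (t q : ℤ) :
    ∑ π ∈ (AV132 (m+1+r)).filter (fun π => π ⟨m, by omega⟩ = ⟨m+r, by omega⟩),
      t ^ a231 π * q ^ a12 π
    = ∑ p ∈ (AV132 m) ×ˢ (AV132 r),
      t ^ (a231 p.1 + a231 p.2 + m*r + r * a12 p.1) * q ^ (a12 p.1 + a12 p.2 + m) := by
  symm
  apply Finset.sum_bij (fun (p : Equiv.Perm (Fin m) × Equiv.Perm (Fin r)) (_ : p ∈ (AV132 m) ×ˢ (AV132 r)) => glue p.1 p.2)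
  · intro p hp
    rw [Finset.mem_product] at hp
    rw [Finset.mem_filter, mem_AV132]
    exact ⟨glue_avoids (mem_AV132.mp hp.1) (mem_AV132.mp hp.2),
      Fin.ext (glue_val_mid p.1 p.2 ⟨m, by omega⟩ rfl)⟩
  · intro p1 h1 p2 h2 heq
    have hL : p1.1 = p2.1 := by
      apply Equiv.ext; intro i; apply Fin.ext
      have e1 := glue_val_left p1.1 p1.2 ⟨i.val, by have := i.isLt; omega⟩ i.isLt
      have e2 := glue_val_left p2.1 p2.2 ⟨i.val, by have := i.isLt; omega⟩ i.isLt
      rw [heq] at e1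
      simp only [Fin.eta] at e1 e2
      omega
    have hR : p1.2 = p2.2 := by
      apply Equiv.ext; intro j; apply Fin.ext
      have e1 := glue_val_right p1.1 p1.2 ⟨m+1+j.val, by have := j.isLt; omega⟩ (by show m < m+1+j.val; omega)
      have e2 := glue_val_right p2.1 p2.2 ⟨m+1+j.val, by have := j.isLt; omega⟩ (by show m < m+1+j.val; omega)
      rw [heq] at e1
      have hj : (⟨(⟨m+1+j.val, by have := j.isLt; omega⟩ : Fin (m+1+r)).val - (m+1), by have := j.isLt; omega⟩ : Fin r) = j := Fin.ext (by show m+1+j.val - (m+1) = j.val; omega)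
      rw [hj] at e1 e2
      omega
    exact Prod.ext hL hR
  · intro π hπ
    have hmle : m ≤ m+1+r := by omega
    have hav := mem_AV132.mp (Finset.mem_filter.mp hπ).1
    have hmid := (Finset.mem_filter.mp hπ).2
    have hLb : ∀ i : Fin m, (π (Fin.castLE hmle i)).val - r < m := by
      intro i
      have h1 := fiber_top hmid (Fin.castLE hmle i) (by simp only [Fin.coe_castLE]; omega)
      have h2 := (π (Fin.castLE hmle i)).isLt
      have h3 := i.isLt
      omega
    have hLlow : ∀ i : Fin m, r ≤ (π (Fin.castLE hmle i)).val := by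
      intro i
      exact fiber_left hav hmid (by simpa using i.isLt)
    have hRb : ∀ j : Fin r, (π (Fin.natAdd (m+1) j)).val < r := by
      intro j
      exact fiber_right hav hmid (by simp; omega)
    set Lf : Fin m → Fin m := fun i => ⟨(π (Fin.castLE hmle i)).val - r, hLb i⟩ with hLf
    set Rf : Fin r → Fin r := fun j => ⟨(π (Fin.natAdd (m+1) j)).val, hRb j⟩ with hRf
    have hLinj : Function.Injective Lf := by
      intro a b hab
      rw [hLf] at hab
      simp only [Fin.mk.injEq] at hab
      have ha := hLlow a; have hb := hLlow b
      have : π (Fin.castLE hmle a) = π (Fin.castLE hmle b) := Fin.ext (by omega)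
      have := π.injective this
      rwa [Fin.castLE_inj] at this
    have hRinj : Function.Injective Rf := by
      intro a b hab
      rw [hRf] at hab
      simp only [Fin.mk.injEq] at hab
      have : π (Fin.natAdd (m+1) a) = π (Fin.natAdd (m+1) b) := Fin.ext hab
      have h2 := π.injective this
      rw [Fin.ext_iff] at h2
      simp only [Fin.coe_natAdd] at h2
      exact Fin.ext (by omega)
    refine ⟨(Equiv.ofBijective Lf (Finite.injective_iff_bijective.mp hLinj),
             Equiv.ofBijective Rf (Finite.injective_iff_bijective.mp hRinj)), ?_, ?_⟩
    · rw [Finset.mem_product, mem_AV132, mem_AV132]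
      constructor
      · intro i j l hij hjl hpat
        obtain ⟨h1, h2⟩ := hpat
        simp only [Equiv.ofBijective_apply, hLf, Fin.lt_def] at h1 h2
        have hi := hLlow i; have hj := hLlow j; have hl := hLlow l
        refine hav (Fin.castLE hmle i) (Fin.castLE hmle j) (Fin.castLE hmle l)
          (by rw [Fin.lt_def]; simp only [Fin.coe_castLE]; exact Fin.lt_def.mp hij)
          (by rw [Fin.lt_def]; simp only [Fin.coe_castLE]; exact Fin.lt_def.mp hjl) ⟨?_, ?_⟩
        · rw [Fin.lt_def]; omega
        · rw [Fin.lt_def]; omega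
      · intro i j l hij hjl hpat
        obtain ⟨h1, h2⟩ := hpat
        simp only [Equiv.ofBijective_apply, hRf, Fin.lt_def] at h1 h2
        refine hav (Fin.natAdd (m+1) i) (Fin.natAdd (m+1) j) (Fin.natAdd (m+1) l)
          (by rw [Fin.lt_def] at hij ⊢; simp only [Fin.coe_natAdd]; omega)
          (by rw [Fin.lt_def] at hjl ⊢; simp only [Fin.coe_natAdd]; omega) ⟨?_, ?_⟩
        · rw [Fin.lt_def]; omega
        · rw [Fin.lt_def]; omega
    · apply Equiv.ext; intro x; apply Fin.ext
      rcases Nat.lt_trichotomy x.val m with hx | hx | hx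
      · rw [glue_val_left _ _ x hx]
        have hc : Fin.castLE hmle (⟨x.val, hx⟩ : Fin m) = x := Fin.ext (by simp)
        simp only [Equiv.ofBijective_apply, hLf, hc]
        have := hLlow ⟨x.val, hx⟩
        rw [hc] at this
        omega
      · rw [glue_val_mid _ _ x hx]
        have hc : x = ⟨m, by omega⟩ := Fin.ext hx
        rw [hc, hmid]
      · rw [glue_val_right _ _ x hx]
        have hc : Fin.natAdd (m+1) (⟨x.val - (m+1), by have := x.isLt; omega⟩ : Fin r) = x :=
          Fin.ext (by simp; omega)
        simp only [Equiv.ofBijective_apply, hRf, hc]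
  · intro p hp
    rw [a231_glue, a12_glue]

end QRec
namespace QRec

lemma fiber_eq (m r : ℕ) (t q : ℤ) :
    ∑ π ∈ (AV132 (m+1+r)).filter (fun π => π ⟨m, by omega⟩ = ⟨m+r, by omega⟩),
      t ^ a231 π * q ^ a12 π
    = t ^ (m*r) * q ^ m * Q231 m t (t^r * q) * Q231 r t q := by
  rw [fiber_sum, Finset.sum_product]
  unfold Q231
  have key : ∀ (L : Equiv.Perm (Fin m)) (R : Equiv.Perm (Fin r)),
      t ^ (a231 L + a231 R + m*r + r * a12 L) * q ^ (a12 L + a12 R + m)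
      = ((t ^ (m*r) * q ^ m) * (t ^ a231 L * (t^r*q) ^ a12 L)) * (t ^ a231 R * q ^ a12 R) := by
    intro L R
    rw [mul_pow, ← pow_mul]
    ring
  simp only [key]
  rw [← Finset.sum_mul_sum, ← Finset.mul_sum, mul_assoc]

end QRec


/-- `Q_n(t,q) = ∑_{k=1}^n t^{(k-1)(n-k)} q^{k-1} Q_{k-1}(t, t^{n-k} q) Q_{n-k}(t,q)`, `Q_0 = 1`. -/
theorem Q231_recurrence :
    (∀ t q : ℤ, Q231 0 t q = 1) ∧
    ∀ n : ℕ, 1 ≤ n → ∀ t q : ℤ,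
      Q231 n t q = ∑ k ∈ Finset.Icc 1 n, t ^ ((k - 1) * (n - k)) * q ^ (k - 1) * Q231 (k - 1) t (t ^ (n - k) * q) * Q231 (n - k) t q := by
  constructor
  · intro t q
    have h231 : ∀ π : Equiv.Perm (Fin 0), a231 π = 0 := fun π => by
      rw [a231, Finset.card_eq_zero]
      exact Finset.eq_empty_of_forall_notMem (fun p _ => p.1.elim0)
    have h12 : ∀ π : Equiv.Perm (Fin 0), a12 π = 0 := fun π => by
      rw [a12, Finset.card_eq_zero]
      exact Finset.eq_empty_of_forall_notMem (fun p _ => p.1.elim0)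
    rw [Q231]
    rw [show AV132 0 = Finset.univ from Finset.filter_true_of_mem (fun π _ i => i.elim0)]
    simp [h231, h12]
  · intro n hn t q
    have hmaps : ∀ π ∈ AV132 n, (π.symm ⟨n-1, by omega⟩).val ∈ Finset.range n :=
      fun π _ => Finset.mem_range.mpr (Fin.isLt _)
    rw [Q231, ← Finset.sum_fiberwise_of_maps_to hmaps (fun π => t ^ a231 π * q ^ a12 π)]
    rw [← Finset.Ico_add_one_right_eq_Icc, Finset.sum_Ico_eq_sum_range]
    simp only [show n+1-1 = n from by omega]
    apply Finset.sum_congr rfl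
    intro j hj
    rw [Finset.mem_range] at hj
    obtain ⟨r, rfl⟩ : ∃ r, n = j + 1 + r := ⟨n - 1 - j, by omega⟩
    simp only [show 1 + j - 1 = j from by omega, show j + 1 + r - (1 + j) = r from by omega]
    rw [← QRec.fiber_eq j r t q]
    apply Finset.sum_congr _ (fun _ _ => rfl)
    apply Finset.filter_congr
    intro π _
    have hmk : (⟨j+1+r-1, by omega⟩ : Fin (j+1+r)) = ⟨j+r, by omega⟩ :=
      Fin.ext (by show j+1+r-1 = j+r; omega)
    rw [hmk]
    constructor
    · intro h
      have h2 : π.symm ⟨j+r, by omega⟩ = ⟨j, by omega⟩ := Fin.ext h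
      rw [Equiv.symm_apply_eq] at h2
      exact h2.symm
    · intro h
      rw [show (⟨j+r, by omega⟩ : Fin (j+1+r)) = π ⟨j, by omega⟩ from h.symm,
        Equiv.symm_apply_apply]
end
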